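/- arXiv:2303.07710 — 5 statements merged into one kernel-verified Lean document; each statement's English description precedes it below -/
import Mathlib

section
/- Let T be a non-crossing spanning tree on vertices 1, …, n in convex position that contains at least one non-border edge, and let e be a border edge not in T. Then there exists a non-border edge e' ∈ T on the unique cycle of T ∪ {e} such that (T ∪ {e}) \ {e'} is again a non-crossing spanning tree containing all border edges of T together with e. -/
open Finset

/-- An edge (chord) on `n` points in convex position, as an unordered pair of indices. -/
abbrev Edge (n : ℕ) := Sym2 (Fin n)

/-- The cyclic successor of a point. -/
def next {n : ℕ} (i : Fin n) : Fin n := ⟨((i : ℕ) + 1) % n, Nat.mod_lt _ i.pos⟩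


/-- Chords `{a,b}` (with `a<b`) and `{c,d}` (with `c<d`) cross iff
`a<c<b<d` or `c<a<d<b`. -/
def Cross {n : ℕ} (e f : Edge n) : Prop :=
  ∃ a b c d : Fin n, e = s(a, b) ∧ f = s(c, d) ∧ a < b ∧ c < d ∧
    ((a < c ∧ c < b ∧ b < d) ∨ (c < a ∧ a < d ∧ d < b))

/-- A set of chords is non-crossing if no two of its chords cross. -/
def NonCrossing {n : ℕ} (E : Finset (Edge n)) : Prop :=
  ∀ e ∈ E, ∀ f ∈ E, ¬ Cross e f

/-- A border edge joins two cyclically consecutive points (this includes `{n-1, 0}`,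
i.e. `{v_n, v_1}`, since addition in `Fin n` wraps around). -/
def IsBorder {n : ℕ} (e : Edge n) : Prop := ∃ i : Fin n, e = s(i, next i)

/-- A spanning tree on the `n` points, given by its edge set: loopless, connected,
with `n - 1` edges. -/
def IsSpanningTree {n : ℕ} (T : Finset (Edge n)) : Prop :=
  (SimpleGraph.fromEdgeSet (T : Set (Edge n))).Connected ∧
    T.card = n - 1 ∧ ∀ e ∈ T, ¬ e.IsDiag

/-- A non-crossing spanning tree. -/
def NCST {n : ℕ} (T : Finset (Edge n)) : Prop := IsSpanningTree T ∧ NonCrossing T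

/-- A flip removes one edge and adds another so that the result is again a
non-crossing spanning tree. -/
def Flip {n : ℕ} (T T' : Finset (Edge n)) : Prop :=
  NCST T ∧ NCST T' ∧ ∃ e ∈ T, ∃ f, f ∉ T ∧ T' = insert f (T.erase e)

/-- A flip sequence of length `k` from `T₁` to `T₂`. -/
def FlipSeq {n : ℕ} (T₁ T₂ : Finset (Edge n)) (k : ℕ) : Prop :=
  ∃ f : ℕ → Finset (Edge n), f 0 = T₁ ∧ f k = T₂ ∧ ∀ i < k, Flip (f i) (f (i + 1))

/-- There is a flip sequence from `T₁` to `T₂` of length at most `m`. -/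
def FlipDistLE {n : ℕ} (T₁ T₂ : Finset (Edge n)) (m : ℕ) : Prop :=
  ∃ k ≤ m, FlipSeq T₁ T₂ k


lemma next_val {n : ℕ} (i : Fin n) :
    ((next i : Fin n) : ℕ) = (i : ℕ) + 1 ∨ ((i : ℕ) + 1 = n ∧ ((next i : Fin n) : ℕ) = 0) := by
  have h1 : (i : ℕ) < n := i.2
  by_cases h : (i : ℕ) + 1 < n
  · left; simp [next, Nat.mod_eq_of_lt h]
  · right
    have hn : (i : ℕ) + 1 = n := by omega
    exact ⟨hn, by simp [next, hn]⟩

lemma next_ne {n : ℕ} (hn : 2 ≤ n) (i : Fin n) : next i ≠ i := by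
  intro hEq
  have := congrArg Fin.val hEq
  rcases next_val i with h | ⟨h1, h2⟩ <;> omega

lemma border_cross_left {n : ℕ} {e f : Edge n} (he : IsBorder e) : ¬ Cross e f := by
  rintro ⟨a, b, c, d, hea, hf, hab, hcd, hor⟩
  obtain ⟨i, hi⟩ := he
  rw [hi] at hea
  have hd : (d : ℕ) < n := d.2
  have hc : (c : ℕ) < n := c.2
  simp only [Fin.lt_def] at hab hcd hor
  rcases Sym2.eq_iff.mp hea with ⟨h1, h2⟩ | ⟨h1, h2⟩ <;>
    [(have hb := h2 ▸ next_val i; rw [h1] at *); (have hb := h2 ▸ next_val i; rw [h1] at *)] <;>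
    rcases hb with h | ⟨h1', h2'⟩ <;> omega

lemma border_cross_right {n : ℕ} {e f : Edge n} (he : IsBorder e) : ¬ Cross f e := by
  rintro ⟨a, b, c, d, hf, hec, hab, hcd, hor⟩
  obtain ⟨i, hi⟩ := he
  rw [hi] at hec
  have hb : (b : ℕ) < n := b.2
  have ha : (a : ℕ) < n := a.2
  simp only [Fin.lt_def] at hab hcd hor
  rcases Sym2.eq_iff.mp hec with ⟨h1, h2⟩ | ⟨h1, h2⟩ <;>
    [(have hdd := h2 ▸ next_val i; rw [h1] at *); (have hdd := h2 ▸ next_val i; rw [h1] at *)] <;>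
    rcases hdd with h | ⟨h1', h2'⟩ <;> omega

lemma walk_visits {n : ℕ} {G : SimpleGraph (Fin n)} (φ : Fin n → ℕ) :
    ∀ {a b : Fin n} (w : G.Walk a b),
      (∀ u v : Fin n, s(u, v) ∈ w.edges → φ v = φ u + 1 ∨ φ u = φ v + 1) →
      ∀ m : ℕ, ((φ a ≤ m ∧ m ≤ φ b) ∨ (φ b ≤ m ∧ m ≤ φ a)) →
      ∃ x ∈ w.support, φ x = m := by
  intro a b w
  induction w with
  | @nil a => intro _ m hm; exact ⟨a, by simp, by omega⟩
  | @cons a c b hadj w ih =>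
    intro hstep m hm
    by_cases hma : φ a = m
    · exact ⟨a, by simp, hma⟩
    · have hac : φ c = φ a + 1 ∨ φ a = φ c + 1 := hstep a c (by simp)
      obtain ⟨x, hx, hxm⟩ := ih (fun u v huv => hstep u v (by simp [huv])) m (by omega)
      exact ⟨x, by simp [hx], hxm⟩

lemma reachable_of_adj_reachable {V : Type*} {G H : SimpleGraph V}
    (h : ∀ a b : V, G.Adj a b → H.Reachable a b) :
    ∀ {a b : V}, G.Reachable a b → H.Reachable a b := by
  intro a b hr
  obtain ⟨w⟩ := hr
  induction w with
  | nil => exact SimpleGraph.Reachable.refl _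
  | cons hadj _ ih => exact (h _ _ hadj).trans ih

/-- If a non-crossing spanning tree `T` contains a non-border edge and `e` is a border
edge not in `T`, then some non-border edge `e'` of `T` (on the unique cycle of `T ∪ {e}`)
can be removed so that the result is a non-crossing spanning tree containing `e` and
all border edges of `T`. -/
theorem add_border_edge_flip {n : ℕ} (T : Finset (Edge n)) (e : Edge n)
    (hT : NCST T) (hnb : ∃ f ∈ T, ¬ IsBorder f)
    (he : IsBorder e) (heT : e ∉ T) :
    ∃ e' ∈ T, ¬ IsBorder e' ∧ NCST ((insert e T).erase e') ∧
      e ∈ (insert e T).erase e' ∧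
      ∀ f ∈ T, IsBorder f → f ∈ (insert e T).erase e' := by
  classical
  obtain ⟨f0, hf0T, hf0nb⟩ := hnb
  obtain ⟨⟨hconn, hcard, hdiag⟩, hNC⟩ := hT
  -- n ≥ 3
  have hn : 3 ≤ n := by
    by_contra hlt
    push_neg at hlt
    interval_cases n
    · have hT0 : T = ∅ := Finset.card_eq_zero.mp (by omega)
      rw [hT0] at hf0T
      simp at hf0T
    · have hT0 : T = ∅ := Finset.card_eq_zero.mp (by omega)
      rw [hT0] at hf0T
      simp at hf0T
    · refine hf0nb ?_
      induction f0 using Sym2.ind with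
      | _ a b =>
        have hab : a ≠ b := by
          have := hdiag _ hf0T
          simpa [Sym2.mk_isDiag_iff] using this
        refine ⟨0, ?_⟩
        revert hab
        fin_cases a <;> fin_cases b <;> decide
  obtain ⟨i, hei⟩ := he
  set G := SimpleGraph.fromEdgeSet (T : Set (Edge n)) with hG
  obtain ⟨w0⟩ := hconn.preconnected i (next i)
  set p := w0.toPath with hpdef
  have hedgesT : ∀ x ∈ (p : G.Walk i (next i)).edges, x ∈ T := by
    intro x hx
    have hx2 := (p : G.Walk i (next i)).edges_subset_edgeSet hx
    rw [hG, SimpleGraph.edgeSet_fromEdgeSet] at hx2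
    exact hx2.1
  have hkey : ∃ e' ∈ (p : G.Walk i (next i)).edges, ¬ IsBorder e' := by
    by_contra hall
    push_neg at hall
    set φ : Fin n → ℕ :=
      fun j => if (i : ℕ) < (j : ℕ) then (j : ℕ) - ((i : ℕ) + 1)
               else (j : ℕ) + n - ((i : ℕ) + 1) with hφ
    have hφinj : Function.Injective φ := by
      intro u v huv
      have hu := u.2; have hv := v.2; have hi2 := i.2
      simp only [hφ] at huv
      split_ifs at huv <;> (apply Fin.ext; omega)
    have hstep : ∀ u v : Fin n, s(u, v) ∈ (p : G.Walk i (next i)).edges →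
        φ v = φ u + 1 ∨ φ u = φ v + 1 := by
      intro u v huv
      obtain ⟨j, hj⟩ := hall _ huv
      have hT' := hedgesT _ huv
      have hji : (j : ℕ) ≠ (i : ℕ) := by
        intro hEq
        apply heT
        rw [hei, ← show j = i from Fin.ext hEq, ← hj]
        exact hT'
      have hmain : φ (next j) = φ j + 1 := by
        have hj2 := j.2; have hi2 := i.2
        rcases next_val j with hv | ⟨hv1, hv2⟩ <;>
          (simp only [hφ]; split_ifs <;> omega)
      rcases Sym2.eq_iff.mp hj with ⟨h1, h2⟩ | ⟨h1, h2⟩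
      · left; rw [h1, h2]; exact hmain
      · right; rw [h1, h2]; exact hmain
    have hφi : φ i = n - 1 := by
      have hi2 := i.2
      simp only [hφ, lt_irrefl, if_false]
      omega
    have hφni : φ (next i) = 0 := by
      have hi2 := i.2
      rcases next_val i with hv | ⟨hv1, hv2⟩ <;>
        (simp only [hφ]; split_ifs <;> omega)
    have hsupp : ∀ v : Fin n, v ∈ (p : G.Walk i (next i)).support := by
      intro v
      have hv2 := v.2; have hi2 := i.2
      have hvle : φ v ≤ n - 1 := by simp only [hφ]; split_ifs <;> omega
      obtain ⟨x, hx, hxv⟩ := walk_visits φ (p : G.Walk i (next i)) hstep (φ v)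
        (by rw [hφi, hφni]; omega)
      rwa [show x = v from hφinj hxv] at hx
    have hnodup := p.2.support_nodup
    have hlen : (p : G.Walk i (next i)).support.length = n := by
      have h1 : (p : G.Walk i (next i)).support.toFinset = Finset.univ :=
        Finset.eq_univ_iff_forall.mpr (fun v => List.mem_toFinset.mpr (hsupp v))
      have h2 := List.toFinset_card_of_nodup hnodup
      rw [h1, Finset.card_univ, Fintype.card_fin] at h2
      omega
    have hlene : (p : G.Walk i (next i)).edges.length = n - 1 := by
      have := (p : G.Walk i (next i)).length_support
      have := (p : G.Walk i (next i)).length_edges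
      omega
    have hedgefin : (p : G.Walk i (next i)).edges.toFinset = T := by
      apply Finset.eq_of_subset_of_card_le
      · intro x hx; exact hedgesT x (List.mem_toFinset.mp hx)
      · rw [hcard, List.toFinset_card_of_nodup p.2.isTrail.edges_nodup, hlene]
    have : f0 ∈ (p : G.Walk i (next i)).edges :=
      List.mem_toFinset.mp (hedgefin ▸ hf0T)
    exact hf0nb (hall _ this)
  obtain ⟨e', he'p, he'nb⟩ := hkey
  have he'T : e' ∈ T := hedgesT _ he'p
  have hene' : e ≠ e' := fun h => he'nb (h ▸ ⟨i, hei⟩)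
  have hnn : 2 ≤ n := by omega
  have hemem : e ∈ (insert e T).erase e' :=
    Finset.mem_erase.mpr ⟨hene', Finset.mem_insert_self _ _⟩
  refine ⟨e', he'T, he'nb, ⟨⟨?_, ?_, ?_⟩, ?_⟩, hemem, ?_⟩
  · -- connectivity
    set S := (insert e T).erase e' with hS
    have hadjreach : ∀ a b : Fin n, G.Adj a b →
        (SimpleGraph.fromEdgeSet (S : Set (Edge n))).Reachable a b := by
      intro u v huv
      rw [hG, SimpleGraph.fromEdgeSet_adj] at huv
      obtain ⟨huvT, huvne⟩ := huv
      by_cases hx : s(u, v) = e'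
      · -- go around the cycle
        set G2 := SimpleGraph.fromEdgeSet ((insert e T : Finset (Edge n)) : Set (Edge n)) with hG2
        have hsub : (T : Set (Edge n)) ⊆ ((insert e T : Finset (Edge n)) : Set (Edge n)) := by
          intro x hx2
          simp only [Finset.coe_insert, Set.mem_insert_iff]
          exact Or.inr hx2
        have hle : G ≤ G2 := by
          rw [hG, hG2]
          exact SimpleGraph.fromEdgeSet_mono hsub
        have hpe : ∀ x ∈ (p : G.Walk i (next i)).edges, x ∈ G2.edgeSet := by
          intro x hx2
          have h3 := (p : G.Walk i (next i)).edges_subset_edgeSet hx2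
          exact SimpleGraph.edgeSet_mono hle h3
        set q := (p : G.Walk i (next i)).transfer G2 hpe with hq
        have hqpath : q.IsPath := p.2.transfer hpe
        have hadj2 : G2.Adj (next i) i := by
          rw [hG2, SimpleGraph.fromEdgeSet_adj]
          refine ⟨?_, next_ne hnn i⟩
          have : s(next i, i) = e := by rw [hei, Sym2.eq_swap]
          rw [this]
          simp
        have hecyc : s(next i, i) ∉ q.edges := by
          rw [hq, SimpleGraph.Walk.edges_transfer]
          intro hmem
          apply heT
          have : s(next i, i) = e := by rw [hei, Sym2.eq_swap]
          rw [← this]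
          exact hedgesT _ hmem
        have hcyc : (SimpleGraph.Walk.cons hadj2 q).IsCycle :=
          (SimpleGraph.Walk.cons_isCycle_iff q hadj2).mpr ⟨hqpath, hecyc⟩
        have hmem : s(u, v) ∈ (SimpleGraph.Walk.cons hadj2 q).edges := by
          rw [SimpleGraph.Walk.edges_cons]
          right
          rw [hq, SimpleGraph.Walk.edges_transfer, hx]
          exact he'p
        have hr2 := (SimpleGraph.adj_and_reachable_delete_edges_iff_exists_cycle.mpr
          ⟨next i, _, hcyc, hmem⟩).2
        refine hr2.mono ?_
        intro a b hab
        rw [SimpleGraph.deleteEdges, SimpleGraph.sdiff_adj] at hab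
        obtain ⟨hab1, hab2⟩ := hab
        rw [hG2, SimpleGraph.fromEdgeSet_adj] at hab1
        rw [SimpleGraph.fromEdgeSet_adj]
        refine ⟨?_, hab1.2⟩
        have habne' : s(a, b) ≠ e' := by
          intro hEq
          exact hab2 ((SimpleGraph.fromEdgeSet_adj _).mpr ⟨by rw [hEq, ← hx]; rfl, hab1.2⟩)
        simp only [hS, Finset.coe_erase, Set.mem_diff, Set.mem_singleton_iff]
        exact ⟨hab1.1, habne'⟩
      · refine SimpleGraph.Adj.reachable ?_
        rw [SimpleGraph.fromEdgeSet_adj]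
        refine ⟨?_, huvne⟩
        simp only [hS, Finset.coe_erase, Set.mem_diff, Set.mem_singleton_iff]
        exact ⟨by simp [huvT], hx⟩
    have hne : Nonempty (Fin n) := ⟨i⟩
    exact SimpleGraph.Connected.mk
      (fun a b => reachable_of_adj_reachable hadjreach (hconn.preconnected a b))
  · -- card
    rw [Finset.card_erase_of_mem (Finset.mem_insert_of_mem he'T),
      Finset.card_insert_of_notMem heT, hcard]
    omega
  · -- non-diag
    intro x hx
    rcases Finset.mem_insert.mp (Finset.mem_of_mem_erase hx) with h | h
    · rw [h, hei]
      simpa [Sym2.mk_isDiag_iff] using (next_ne hnn i).symm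
    · exact hdiag x h
  · -- non-crossing
    intro x hx y hy
    have hx' := Finset.mem_insert.mp (Finset.mem_of_mem_erase hx)
    have hy' := Finset.mem_insert.mp (Finset.mem_of_mem_erase hy)
    rcases hx' with rfl | hx' 
    · exact border_cross_left ⟨i, hei⟩
    · rcases hy' with rfl | hy'
      · exact border_cross_right ⟨i, hei⟩
      · exact hNC x hx' y hy'
  · -- borders preserved
    intro f hf hfb
    exact Finset.mem_erase.mpr ⟨fun h => he'nb (h ▸ hfb), Finset.mem_insert_of_mem hf⟩
end

section
/- Let i ≤ n and let T₁, T₂ be non-crossing spanning trees of n points in convex position such that T₁ contains all border edges {j, j+1} for j < i, and T₂ contains no edge {j,k} with both j > i and k > i. Then there exists a flip sequence between T₁ and T₂ of length at most |T₁ Δ T₂| / 2. -/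
/-!
Since both trees have `n - 1` edges, `|T₁ Δ T₂| = 2 |T₂ \ T₁|`, and it suffices to find a flip,
at either end, that decreases `|T₂ \ T₁|` by one and keeps the hypotheses.
If `T₂` misses a border edge `{j, j+1}` with `j + 1 < i`, this edge of `T₁` crosses nothing, so it
is flipped into `T₂` in exchange for an edge of `T₂ \ T₁` on the cycle it closes. Otherwise both
trees contain the border path on the first `i` points, and it suffices to find an edge of
`T₂ \ T₁` crossing no edge of `T₁`: it is flipped into `T₁` in the same way.

To find it (with `A = T₁`, `B = T₂`), call a point anchored if `A ∩ B` connects it to `v₁`; all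
points before `i` are. An edge of `A` crossing an edge of `B \ A` has exactly one anchored
endpoint, and each non-anchored point `w` has `B`-neighbours only before `i`, which can only move
down as `w` grows. If every edge of `B \ A` were crossed, following a crossing edge would turn
each obstruction into a smaller one, whereas the last non-anchored point is an obstruction.
-/

open Finset

open SimpleGraph

section

variable {n : ℕ}

lemma val_next_of_lt {j : Fin n} (h : (j : ℕ) + 1 < n) : (next j : ℕ) = j + 1 :=
  Nat.mod_eq_of_lt h

namespace Cross

lemma symm {e f : Edge n} (h : Cross e f) : Cross f e := by
  obtain ⟨a, b, c, d, rfl, rfl, hab, hcd, h⟩ := h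
  exact ⟨c, d, a, b, rfl, rfl, hcd, hab, h.symm⟩

lemma irrefl (e : Edge n) : ¬ Cross e e := by
  rintro ⟨a, b, c, d, rfl, he, hab, hcd, h⟩
  obtain ⟨rfl, rfl⟩ | ⟨rfl, rfl⟩ := Sym2.eq_iff.1 he <;> omega

lemma exists_of_lt {x w : Fin n} {g : Edge n} (hxw : x < w) (h : Cross s(x, w) g) :
    ∃ c d, g = s(c, d) ∧ c < d ∧ ((x < c ∧ c < w ∧ w < d) ∨ (c < x ∧ x < d ∧ d < w)) := by
  obtain ⟨a, b, c, d, he, rfl, hab, hcd, h⟩ := h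
  obtain ⟨rfl, rfl⟩ | ⟨rfl, rfl⟩ := Sym2.eq_iff.1 he
  · exact ⟨c, d, rfl, hcd, h⟩
  · omega

end Cross

lemma IsBorder.not_cross {e : Edge n} (he : IsBorder e) (g : Edge n) : ¬ Cross e g := by
  obtain ⟨j, rfl⟩ := he
  rintro ⟨a, b, c, d, he, rfl, hab, hcd, h⟩
  rcases Nat.lt_or_ge ((j : ℕ) + 1) n with hj | hj
  · have hnext := val_next_of_lt hj
    obtain ⟨h₁, h₂⟩ | ⟨h₁, h₂⟩ := Sym2.eq_iff.1 he <;> omega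
  · have hnext : (next j : ℕ) = 0 := by simp [next, show (j : ℕ) + 1 = n by omega]
    obtain ⟨h₁, h₂⟩ | ⟨h₁, h₂⟩ := Sym2.eq_iff.1 he <;> omega

namespace NonCrossing

variable {T : Finset (Edge n)}

lemma mono {S : Finset (Edge n)} (hT : NonCrossing T) (h : S ⊆ T) : NonCrossing S :=
  fun e he f hf => hT e (h he) f (h hf)

lemma insert_of_not_cross {f : Edge n} (hT : NonCrossing T) (hf : ∀ g ∈ T, ¬ Cross f g) :
    NonCrossing (insert f T) := by
  intro e he g hg
  rcases mem_insert.1 he with rfl | heT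
  · rcases mem_insert.1 hg with rfl | hgT
    · exact Cross.irrefl _
    · exact hf g hgT
  · rcases mem_insert.1 hg with rfl | hgT
    · exact fun h => hf e heT h.symm
    · exact hT e heT g hgT

lemma not_interleaved (hT : NonCrossing T) {a b c d : Fin n} (h₁ : s(a, b) ∈ T)
    (h₂ : s(c, d) ∈ T) (hac : a < c) (hcb : c < b) (hbd : b < d) : False :=
  hT _ h₁ _ h₂ ⟨a, b, c, d, rfl, rfl, hac.trans hcb, hcb.trans hbd, .inl ⟨hac, hcb, hbd⟩⟩

end NonCrossing

end

section

variable {n : ℕ} {T : Finset (Edge n)}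

lemma connected_insert_erase_of_mem_edges (hT : (fromEdgeSet (T : Set (Edge n))).Connected)
    {u v : Fin n} (huv : u ≠ v) (hf : s(u, v) ∉ T) {p : (fromEdgeSet (T : Set (Edge n))).Walk u v}
    (hp : p.IsPath) {e : Edge n} (he : e ∈ p.edges) :
    (fromEdgeSet (↑(insert s(u, v) (T.erase e)) : Set (Edge n))).Connected := by
  set G := fromEdgeSet (↑(insert s(u, v) T) : Set (Edge n))
  have hle : fromEdgeSet (T : Set (Edge n)) ≤ G := fromEdgeSet_mono (by simp)
  have hadj : G.Adj v u := (fromEdgeSet_adj _).2 ⟨by simp [Sym2.eq_swap], huv.symm⟩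
  -- `e` lies on the cycle formed by `p` and `uv`, so it is not a bridge of `T + uv`
  have hcycle : (Walk.cons hadj (p.mapLe hle)).IsCycle :=
    Path.cons_isCycle ⟨_, hp.mapLe hle⟩ hadj fun h => by
      rw [Walk.edges_mapLe_eq_edges, Sym2.eq_swap] at h
      simpa [hf] using p.edges_subset_edgeSet h
  have hbridge : ¬ G.IsBridge e := fun hb =>
    hb.notMem_edges_of_isCycle hcycle (by simp [he])
  have hfe : s(u, v) ≠ e := by
    rintro rfl
    simpa [hf] using p.edges_subset_edgeSet he
  have hdel : fromEdgeSet (↑(insert s(u, v) (T.erase e)) : Set (Edge n)) = G.deleteEdges {e} := by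
    rw [deleteEdges, ← fromEdgeSet_sdiff]
    congr 1
    ext g
    by_cases hg : g = e <;> simp [hg, hfe.symm]
  induction e using Sym2.ind with
  | _ x y => exact hdel ▸ (hT.mono hle).connected_delete_edge_of_not_isBridge hbridge

namespace IsSpanningTree

lemma edgeSet_eq (hT : IsSpanningTree T) :
    (fromEdgeSet (T : Set (Edge n))).edgeSet = T := by
  rw [edgeSet_fromEdgeSet, sdiff_eq_left, Set.disjoint_left]
  exact fun e he => Sym2.mem_diagSet.not.2 (hT.2.2 e he)

lemma isTree (hT : IsSpanningTree T) : (fromEdgeSet (T : Set (Edge n))).IsTree := by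
  have hn : 0 < n := Fin.pos hT.1.nonempty.some
  refine isTree_iff_connected_and_card.2 ⟨hT.1, ?_⟩
  rw [hT.edgeSet_eq, Nat.card_coe_set_eq, Set.ncard_coe_finset, hT.2.1, Nat.card_eq_fintype_card,
    Fintype.card_fin]
  omega

lemma mem_of_reachable (hT : IsSpanningTree T) {E : Finset (Edge n)} (hE : E ⊆ T) {u v : Fin n}
    (huv : s(u, v) ∈ T) (h : (fromEdgeSet (E : Set (Edge n))).Reachable u v) : s(u, v) ∈ E := by
  by_contra huvE
  have hbridge := isAcyclic_iff_forall_isBridge.1 hT.isTree.isAcyclic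
    (by rw [hT.edgeSet_eq]; exact huv)
  refine isBridge_iff.1 hbridge (h.mono fun a b hab => ?_)
  rw [fromEdgeSet_adj] at hab
  refine deleteEdges_adj.2 ⟨(fromEdgeSet_adj _).2 ⟨hE hab.1, hab.2⟩, ?_⟩
  rintro h
  rw [Set.mem_singleton_iff.1 h] at hab
  exact huvE hab.1

lemma exists_exchange (hT : IsSpanningTree T) {T' : Finset (Edge n)} (hT' : IsSpanningTree T')
    {f : Edge n} (hf : f ∈ T' \ T) : ∃ e ∈ T \ T', IsSpanningTree (insert f (T.erase e)) := by
  obtain ⟨hfT', hfT⟩ := mem_sdiff.1 hf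
  induction f using Sym2.ind with | _ u v => ?_
  have huv : u ≠ v := fun h => hT'.2.2 _ hfT' (Sym2.mk_isDiag_iff.2 h)
  obtain ⟨p, hp⟩ := hT.1.exists_isPath u v
  have hpT : ∀ e ∈ p.edges, e ∈ T := fun e he => by
    simpa [hT.edgeSet_eq] using p.edges_subset_edgeSet he
  -- the path cannot lie in `T'`, which would then contain a cycle through `uv`
  obtain ⟨e, hep, heT'⟩ : ∃ e ∈ p.edges, e ∉ T' := by
    by_contra! hpT'
    refine hfT (mem_inter.1 (hT'.mem_of_reachable inter_subset_right hfT' ⟨p.transfer _ ?_⟩)).1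
    intro e he
    rw [edgeSet_fromEdgeSet]
    exact ⟨mem_inter.2 ⟨hpT e he, hpT' e he⟩, fun hd => hT.2.2 e (hpT e he) hd⟩
  have heT := hpT e hep
  refine ⟨e, mem_sdiff.2 ⟨heT, heT'⟩, connected_insert_erase_of_mem_edges hT.1 huv hfT hp hep,
    ?_, ?_⟩
  · rw [card_insert_of_notMem fun h => hfT (mem_of_mem_erase h), card_erase_of_mem heT, hT.2.1]
    have := card_pos.2 ⟨e, heT⟩
    omega
  · exact forall_mem_insert _ _ _ |>.2 ⟨hT'.2.2 _ hfT', fun g hg => hT.2.2 g (mem_of_mem_erase hg)⟩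

end IsSpanningTree

end

section

variable {n : ℕ} {T T' T₁ T₂ : Finset (Edge n)}

lemma NCST.exists_flip (hT : NCST T) (hT' : IsSpanningTree T') {f : Edge n} (hf : f ∈ T' \ T)
    (hfree : ∀ g ∈ T, ¬ Cross f g) : ∃ e ∈ T \ T', Flip T (insert f (T.erase e)) := by
  obtain ⟨e, he, hspan⟩ := hT.1.exists_exchange hT' hf
  refine ⟨e, he, hT, ⟨hspan, ?_⟩, e, (mem_sdiff.1 he).1, f, (mem_sdiff.1 hf).2, rfl⟩
  exact (hT.2.mono (erase_subset e T)).insert_of_not_cross fun g hg => hfree g (mem_of_mem_erase hg)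

lemma Flip.symm (h : Flip T T') : Flip T' T := by
  obtain ⟨hT, hT', e, he, f, hf, rfl⟩ := h
  have hfe : f ≠ e := fun h => hf (h ▸ he)
  refine ⟨hT', hT, f, mem_insert_self f _, e, fun h => ?_, ?_⟩
  · rcases mem_insert.1 h with h | h
    · exact hfe h.symm
    · exact notMem_erase e T h
  · rw [erase_insert fun h => hf (mem_of_mem_erase h), insert_erase he]

lemma FlipSeq.cons {k : ℕ} (h : Flip T₁ T) (hs : FlipSeq T T₂ k) : FlipSeq T₁ T₂ (k + 1) := by
  obtain ⟨f, rfl, rfl, hf⟩ := hs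
  refine ⟨fun j => Nat.casesOn j T₁ f, rfl, rfl, fun j hj => ?_⟩
  cases j with
  | zero => exact h
  | succ j => exact hf j (by omega)

lemma FlipSeq.snoc {k : ℕ} (hs : FlipSeq T₁ T k) (h : Flip T T₂) : FlipSeq T₁ T₂ (k + 1) := by
  obtain ⟨f, rfl, rfl, hf⟩ := hs
  refine ⟨Function.update f (k + 1) T₂, by simp, by simp, fun j hj => ?_⟩
  rcases Nat.lt_succ_iff_lt_or_eq.1 hj with hj | rfl
  · rw [Function.update_of_ne (by omega), Function.update_of_ne (by omega)]
    exact hf j hj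
  · rw [Function.update_of_ne (by omega), Function.update_self]
    exact h

lemma flipDistLE_self (T : Finset (Edge n)) : FlipDistLE T T 0 :=
  ⟨0, le_rfl, fun _ => T, rfl, rfl, fun _ h => absurd h (Nat.not_lt_zero _)⟩

lemma FlipDistLE.cons {m : ℕ} (h : Flip T₁ T) (hd : FlipDistLE T T₂ m) :
    FlipDistLE T₁ T₂ (m + 1) :=
  let ⟨k, hk, hs⟩ := hd
  ⟨k + 1, by omega, hs.cons h⟩

lemma FlipDistLE.snoc {m : ℕ} (hd : FlipDistLE T₁ T m) (h : Flip T T₂) :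
    FlipDistLE T₁ T₂ (m + 1) :=
  let ⟨k, hk, hs⟩ := hd
  ⟨k + 1, by omega, hs.snoc h⟩

end

section

variable {n : ℕ} {i : ℕ}

def HasBorderPathBelow (i : ℕ) (T : Finset (Edge n)) : Prop :=
  ∀ j : Fin n, (j : ℕ) + 1 < i → s(j, next j) ∈ T

def EdgesMeetBelow (i : ℕ) (T : Finset (Edge n)) : Prop :=
  ∀ a b : Fin n, s(a, b) ∈ T → (a : ℕ) < i ∨ (b : ℕ) < i

variable {A B : Finset (Edge n)}

lemma HasBorderPathBelow.inter (hA : HasBorderPathBelow i A)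
    (hB : HasBorderPathBelow i B) : HasBorderPathBelow i (A ∩ B) :=
  fun j hj => mem_inter.2 ⟨hA j hj, hB j hj⟩

lemma HasBorderPathBelow.reachable {T : Finset (Edge n)} (hT : HasBorderPathBelow i T)
    {w : Fin n} (hw : (w : ℕ) < i) : (fromEdgeSet (T : Set (Edge n))).Reachable ⟨0, w.pos⟩ w := by
  obtain ⟨k, hk⟩ : ∃ k, (w : ℕ) = k := ⟨_, rfl⟩
  induction k generalizing w with
  | zero => rw [show (⟨0, w.pos⟩ : Fin n) = w from Fin.ext hk.symm]
  | succ k ih =>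
    let u : Fin n := ⟨k, by omega⟩
    have hnext : next u = w := Fin.ext (by rw [val_next_of_lt (by simp [u]; omega)]; simp [u, hk])
    have hadj : (fromEdgeSet (T : Set (Edge n))).Adj u w :=
      (fromEdgeSet_adj _).2 ⟨hnext ▸ hT u (by simp [u]; omega), fun h => by simp [← h, u] at hk⟩
    exact (ih (w := u) (by simp [u]; omega) rfl).trans hadj.reachable

def Anchored (A B : Finset (Edge n)) (w : Fin n) : Prop :=
  (fromEdgeSet (↑(A ∩ B) : Set (Edge n))).Reachable ⟨0, w.pos⟩ w

lemma Anchored.of_mem {a b : Fin n} (ha : Anchored A B a) (hab : s(a, b) ∈ A ∩ B) :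
    Anchored A B b := by
  by_cases h : a = b
  · exact h ▸ ha
  · exact ha.trans ((fromEdgeSet_adj _).2 ⟨hab, h⟩).reachable

lemma Anchored.mem_inter {T : Finset (Edge n)} (hT : IsSpanningTree T) (hsub : A ∩ B ⊆ T)
    {a b : Fin n} (hab : s(a, b) ∈ T) (ha : Anchored A B a) (hb : Anchored A B b) :
    s(a, b) ∈ A ∩ B :=
  hT.mem_of_reachable hsub hab (ha.symm.trans hb)

lemma exists_mem_sdiff_of_not_anchored (hB : IsSpanningTree B) (hBi : EdgesMeetBelow i B)
    (hP : HasBorderPathBelow i (A ∩ B)) {w : Fin n} (hw : ¬ Anchored A B w) :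
    i ≤ w ∧ ∃ x : Fin n, (x : ℕ) < i ∧ s(x, w) ∈ B \ A := by
  have hiw : i ≤ (w : ℕ) := by
    by_contra h
    exact hw (hP.reachable (by omega))
  obtain ⟨p⟩ := hB.1 w ⟨0, w.pos⟩
  have hnil : ¬ p.Nil := Walk.not_nil_of_ne fun h => hw (h ▸ Reachable.refl _)
  obtain ⟨hmem, -⟩ := (fromEdgeSet_adj _).1 (p.adj_snd hnil)
  have hx : (p.snd : ℕ) < i := (hBi _ _ hmem).resolve_left (by omega)
  rw [Sym2.eq_swap] at hmem
  exact ⟨hiw, p.snd, hx, mem_sdiff.2 ⟨hmem, fun hA => hw (Anchored.of_mem (hP.reachable hx)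
    (mem_inter.2 ⟨hA, hmem⟩))⟩⟩

def IsObstruction (i : ℕ) (A B : Finset (Edge n)) (u : Fin n) : Prop :=
  ¬ Anchored A B u ∧
    ((∃ c, s(c, u) ∈ A ∧ ∀ x : Fin n, (x : ℕ) < i → s(x, u) ∈ B → c < x) ∨
      ∀ c d, s(c, d) ∈ A → c < u → u < d → Anchored A B d)

lemma IsObstruction.exists_lt (hA : NCST A) (hB : NCST B) (hP : HasBorderPathBelow i (A ∩ B))
    (hBi : EdgesMeetBelow i B) (hcross : ∀ f ∈ B \ A, ∃ g ∈ A, Cross f g) {u : Fin n}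
    (hu : IsObstruction i A B u) : ∃ v < u, IsObstruction i A B v := by
  obtain ⟨hiu, x, hxi, hxu⟩ := exists_mem_sdiff_of_not_anchored hB.1 hBi hP hu.1
  have hxuB := (mem_sdiff.1 hxu).1
  obtain ⟨g, hgA, hcr⟩ := hcross _ hxu
  obtain ⟨c, d, rfl, -, hpos⟩ := hcr.exists_of_lt (by omega)
  have hcd : ¬ (Anchored A B c ∧ Anchored A B d) := fun ⟨hc, hd⟩ =>
    hB.2 _ hxuB _ (mem_inter.1 (Anchored.mem_inter hA.1 inter_subset_left hgA hc hd)).2 hcr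
  rcases hpos with ⟨hxc, hcu, hud⟩ | ⟨hcx, hxd, hdu⟩
  · rcases hu.2 with ⟨c₀, hc₀u, hc₀x⟩ | hcap
    · exact (hA.2.not_interleaved hc₀u hgA ((hc₀x x hxi hxuB).trans hxc) hcu hud).elim
    · have hd := hcap c d hgA hcu hud
      refine ⟨c, hcu, fun hc => hcd ⟨hc, hd⟩, .inr fun c' d' h' hc' hd' => ?_⟩
      rcases lt_trichotomy d' d with hlt | rfl | hgt
      · exact (hA.2.not_interleaved h' hgA hc' hd' hlt).elim
      · exact hd
      · exact hcap c' d' h' (hc'.trans hcu) (hud.trans hgt)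
  · have hc : Anchored A B c := hP.reachable (by omega)
    refine ⟨d, hdu, fun hd => hcd ⟨hc, hd⟩, .inl ⟨c, hgA, fun x' _ hx'd => ?_⟩⟩
    -- `x ≤ x'`, since `s(x', d)` and `s(x, u)` do not cross in `B`
    exact hcx.trans_le (not_lt.1 fun h => hB.2.not_interleaved hx'd hxuB h hxd hdu)

theorem exists_mem_sdiff_forall_not_cross (hA : NCST A) (hB : NCST B)
    (hP : HasBorderPathBelow i (A ∩ B)) (hBi : EdgesMeetBelow i B) (hne : (B \ A).Nonempty) :
    ∃ f ∈ B \ A, ∀ g ∈ A, ¬ Cross f g := by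
  classical
  by_contra! hcross
  have hnone (u : Fin n) : ¬ IsObstruction i A B u := by
    induction u using WellFoundedLT.induction with
    | _ u ih =>
      intro hu
      obtain ⟨v, hvu, hv⟩ := hu.exists_lt hA hB hP hBi hcross
      exact ih v hvu hv
  obtain ⟨f, hf⟩ := hne
  obtain ⟨hfB, hfA⟩ := mem_sdiff.1 hf
  induction f using Sym2.ind with | _ a b => ?_
  have hunanchored : ∃ w, ¬ Anchored A B w := by
    by_contra! h
    exact hfA (mem_inter.1 (Anchored.mem_inter hB.1 inter_subset_right hfB (h a) (h b))).1
  obtain ⟨w, hw, hmax⟩ := exists_max_image ({w | ¬ Anchored A B w} : Finset (Fin n)) id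
    (by simpa [Finset.Nonempty] using hunanchored)
  refine hnone w ⟨(mem_filter.1 hw).2, .inr fun c d _ _ hwd => ?_⟩
  by_contra hd
  exact (hmax d (mem_filter.2 ⟨mem_univ d, hd⟩)).not_gt hwd

theorem flipDistLE_card_sdiff (hA : NCST A) (hB : NCST B)
    (hPA : HasBorderPathBelow i A) (hBi : EdgesMeetBelow i B) :
    FlipDistLE A B (B \ A).card := by
  induction hm : (B \ A).card generalizing A B with
  | zero =>
    have hBA : B ⊆ A := sdiff_eq_empty_iff_subset.1 (card_eq_zero.1 hm)
    rw [eq_of_subset_of_card_le hBA (by rw [hA.1.2.1, hB.1.2.1])]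
    exact flipDistLE_self A
  | succ m ih =>
    by_cases hPB : HasBorderPathBelow i B
    · obtain ⟨f, hf, hfree⟩ :=
        exists_mem_sdiff_forall_not_cross hA hB (hPA.inter hPB) hBi (card_pos.1 (by omega))
      obtain ⟨e, he, hflip⟩ := hA.exists_flip hB.1 hf hfree
      have heB := (mem_sdiff.1 he).2
      refine (ih hflip.2.1 hB (fun j hj => ?_) hBi ?_).cons hflip
      · exact mem_insert_of_mem (mem_erase.2 ⟨fun h => heB (h ▸ hPB j hj), hPA j hj⟩)
      · have hdiff : B \ insert f (A.erase e) = (B \ A).erase f := by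
          ext g
          by_cases hg : g = e <;> simp [hg, heB, and_left_comm]
        rw [hdiff, card_erase_of_mem hf, hm, Nat.add_sub_cancel]
    · simp only [HasBorderPathBelow, not_forall] at hPB
      obtain ⟨j, hj, hjB⟩ := hPB
      obtain ⟨e, he, hflip⟩ := hB.exists_flip hA.1 (mem_sdiff.2 ⟨hPA j hj, hjB⟩)
        fun g _ => IsBorder.not_cross ⟨j, rfl⟩ g
      refine (ih hA hflip.2.1 hPA (fun a b hab => ?_) ?_).snoc hflip.symm
      · rcases mem_insert.1 hab with h | h
        · obtain ⟨rfl, -⟩ | ⟨-, rfl⟩ := Sym2.eq_iff.1 h <;> omega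
        · exact hBi a b (mem_of_mem_erase h)
      · rw [insert_sdiff_of_mem _ (hPA j hj), erase_sdiff_comm, card_erase_of_mem he, hm,
          Nat.add_sub_cancel]

end

theorem main_lemma_general {n : ℕ} (i : ℕ) (T₁ T₂ : Finset (Edge n))
    (h₁ : NCST T₁) (h₂ : NCST T₂)
    (hT₁ : ∀ j : Fin n, (j : ℕ) + 1 < i → s(j, next j) ∈ T₁)
    (hT₂ : ∀ a b : Fin n, s(a, b) ∈ T₂ → (a : ℕ) < i ∨ (b : ℕ) < i) :
    FlipDistLE T₁ T₂ (((T₁ \ T₂) ∪ (T₂ \ T₁)).card / 2) := by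
  have hcard : (T₁ \ T₂).card = (T₂ \ T₁).card := card_sdiff_comm (by rw [h₁.1.2.1, h₂.1.2.1])
  have hhalf : ((T₁ \ T₂) ∪ (T₂ \ T₁)).card / 2 = (T₂ \ T₁).card := by
    rw [card_union_of_disjoint disjoint_sdiff_sdiff]
    omega
  rw [hhalf]
  exact flipDistLE_card_sdiff h₁ h₂ hT₁ hT₂

/-- Main lemma: if `T₁` contains all border edges among the first `i` points and `T₂`
has no edge with both endpoints among the last `n - i` points, then there is a flip
sequence between `T₁` and `T₂` of length at most `|T₁ Δ T₂| / 2`.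
(Points are 0-indexed: `v_j` of the paper is index `j - 1`.) -/
theorem main_lemma {n : ℕ} (i : ℕ) (hi : i ≤ n) (T₁ T₂ : Finset (Edge n))
    (h₁ : NCST T₁) (h₂ : NCST T₂)
    (hT₁ : ∀ j : Fin n, (j : ℕ) + 1 < i → s(j, next j) ∈ T₁)
    (hT₂ : ∀ a b : Fin n, s(a, b) ∈ T₂ → (a : ℕ) < i ∨ (b : ℕ) < i) :
    FlipDistLE T₁ T₂ (((T₁ \ T₂) ∪ (T₂ \ T₁)).card / 2) :=
  main_lemma_general i T₁ T₂ h₁ h₂ hT₁ hT₂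
end

section
/- Let x₁,…,x_n be the vertex order of a non-crossing Hamiltonian path on n points in convex position. Removing x₁ and x_n from the cyclic order splits the remaining vertices into two arcs (the 'top' and 'bottom' parts); then every edge {x_i, x_{i+1}} of the path is either a border edge (joining two cyclically consecutive vertices) or has one endpoint in the closed top part and the other in the closed bottom part. -/
open Finset

/-- `v` lies on the (closed) cyclic arc from `p` to `q` (going in increasing direction). -/
def InArc {n : ℕ} (p q v : Fin n) : Prop :=
  if p ≤ q then (p ≤ v ∧ v ≤ q) else (p ≤ v ∨ v ≤ q)

/-!
Suppose the edge `uv = x i x (i+1)` is neither a border edge nor traversing. Then `u` and `v`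
lie on the same open arc between the endpoints `x 0` and `x (n-1)`, so both endpoints lie on
the same side of the chord `uv`, and the other side contains some point because `uv` is not a
border edge. The path starts and ends outside that side, so it has to enter and leave it; by
non-crossing it can only do so through `u` or `v`, which is impossible since the path passes
through `u` and `v` exactly once, along the edge `uv` itself.
-/

def StrictlyBetween {n : ℕ} (u v w : Fin n) : Prop := (u < w ∧ w < v) ∨ (v < w ∧ w < u)

theorem exists_switch_of_le {p : ℕ → Prop} {a b : ℕ} (hab : a ≤ b) (ha : p a) (hb : ¬ p b) :
    ∃ k, a ≤ k ∧ k < b ∧ p k ∧ ¬ p (k + 1) := by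
  induction b, hab using Nat.le_induction with
  | base => exact absurd ha hb
  | succ b hab ih =>
    by_cases hpb : p b
    · exact ⟨b, hab, b.lt_succ_self, hpb, hb⟩
    · obtain ⟨k, hak, hkb, hk, hk'⟩ := ih hpb
      exact ⟨k, hak, hkb.trans b.lt_succ_self, hk, hk'⟩

/-- A switch on the step `(i - 1, i)` or `(i + 1, i + 2)` would have to be undone by a second
switch elsewhere. -/
theorem forall_not_of_switches_near {p : ℕ → Prop} {i N : ℕ} (h0 : ¬ p 0) (hN : ¬ p N)
    (hi : ¬ p i) (hi' : ¬ p (i + 1))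
    (hswitch : ∀ j < N, (p j ↔ ¬ p (j + 1)) → j + 1 = i ∨ j = i + 1) :
    ∀ t ≤ N, ¬ p t := by
  intro t htN ht
  rcases lt_or_ge t i with hti | hit
  · obtain ⟨j, -, hjt, hj, hj'⟩ :=
      exists_switch_of_le (p := fun k => ¬ p k) (Nat.zero_le t) h0 (not_not.2 ht)
    have := hswitch j (by omega) (iff_of_false hj hj')
    omega
  · obtain rfl | rfl | hit : t = i ∨ t = i + 1 ∨ i + 1 < t := by omega
    · exact hi ht
    · exact hi' ht
    · obtain ⟨k, hk, hkN, hpk, hpk'⟩ := exists_switch_of_le htN ht hN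
      have := hswitch k (by omega) (iff_of_true hpk hpk')
      omega

section Chords

variable {n : ℕ}

theorem cross_of_strictlyBetween {u v c d : Fin n} (hc : StrictlyBetween u v c)
    (hd : ¬ StrictlyBetween u v d) (hdu : d ≠ u) (hdv : d ≠ v) : Cross s(u, v) s(c, d) := by
  simp only [StrictlyBetween, not_or, not_and_or, not_lt] at hc hd
  rcases hc with ⟨huc, hcv⟩ | ⟨hvc, hcu⟩
  · rcases lt_or_gt_of_ne hdu with hdu' | hdu'
    · exact ⟨u, v, d, c, rfl, Sym2.eq_swap, huc.trans hcv, hdu'.trans huc,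
        Or.inr ⟨hdu', huc, hcv⟩⟩
    · have hvd : v < d := lt_of_le_of_ne (hd.1.resolve_left hdu'.not_ge) hdv.symm
      exact ⟨u, v, c, d, rfl, rfl, huc.trans hcv, hcv.trans hvd, Or.inl ⟨huc, hcv, hvd⟩⟩
  · rcases lt_or_gt_of_ne hdv with hdv' | hdv'
    · exact ⟨v, u, d, c, Sym2.eq_swap, Sym2.eq_swap, hvc.trans hcu, hdv'.trans hvc,
        Or.inr ⟨hdv', hvc, hcu⟩⟩
    · have hud : u < d := lt_of_le_of_ne (hd.2.resolve_left hdv'.not_ge) hdu.symm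
      exact ⟨v, u, c, d, Sym2.eq_swap, rfl, hvc.trans hcu, hcu.trans hud, Or.inl ⟨hvc, hcu, hud⟩⟩

theorem cross_of_not_strictlyBetween {u v c d : Fin n} (hc : ¬ StrictlyBetween u v c)
    (hcu : c ≠ u) (hcv : c ≠ v) (hd : StrictlyBetween u v d) : Cross s(u, v) s(c, d) :=
  Sym2.eq_swap (a := d) ▸ cross_of_strictlyBetween hd hc hcu hcv

theorem isBorder_of_forall_not_strictlyBetween {u v : Fin n} (huv : u ≠ v)
    (h : ∀ w, ¬ StrictlyBetween u v w) : IsBorder s(u, v) := by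
  wlog hlt : u < v generalizing u v
  · rw [Sym2.eq_swap]
    exact this huv.symm (fun w hw => h w (Or.comm.1 hw)) (lt_of_le_of_ne (not_lt.1 hlt) huv.symm)
  refine ⟨u, Sym2.congr_right.2 (Fin.ext ?_)⟩
  have hnext : ¬ (u : ℕ) + 1 < v := fun hv =>
    h ⟨(u : ℕ) + 1, by omega⟩ (Or.inl ⟨Fin.lt_def.2 (by simp), Fin.lt_def.2 hv⟩)
  simp only [next, Fin.lt_def] at hlt ⊢
  rw [Nat.mod_eq_of_lt (by omega)]
  omega

theorem isBorder_of_forall_strictlyBetween_or_eq {u v : Fin n}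
    (h : ∀ w, StrictlyBetween u v w ∨ w = u ∨ w = v) : IsBorder s(u, v) := by
  wlog hle : u ≤ v generalizing u v
  · rw [Sym2.eq_swap]
    exact this (fun w => (h w).imp Or.comm.1 Or.comm.1) (not_le.1 hle).le
  have hpos : 0 < n := u.pos
  have h0 := h ⟨0, hpos⟩
  have hlast := h ⟨n - 1, by omega⟩
  simp only [StrictlyBetween, Fin.lt_def, Fin.ext_iff] at h0 hlast
  rw [Fin.le_def] at hle
  refine ⟨v, Sym2.eq_swap.trans (Sym2.congr_right.2 (Fin.ext ?_))⟩
  simp only [next]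
  rw [show (v : ℕ) + 1 = n by omega, Nat.mod_self]
  omega

theorem strictlyBetween_iff_of_not_traverses {A B u v : Fin n}
    (h : ¬ ((InArc A B u ∧ InArc B A v) ∨ (InArc B A u ∧ InArc A B v))) :
    StrictlyBetween u v A ↔ StrictlyBetween u v B := by
  simp only [StrictlyBetween, InArc, Fin.lt_def, Fin.le_def] at h ⊢
  split_ifs at h <;> omega

theorem not_mem_of_noncrossing_path {i : ℕ} {x : ℕ → Fin n} (hx : Set.InjOn x (Set.Iio n))
    (hi : i + 1 < n) (hnc : ∀ j, j + 1 < n → ¬ Cross s(x i, x (i + 1)) s(x j, x (j + 1)))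
    (S : Set (Fin n))
    (hS : ∀ c ∈ S, ∀ d ∉ S, d ≠ x i → d ≠ x (i + 1) → Cross s(x i, x (i + 1)) s(c, d))
    (h0 : x 0 ∉ S) (hlast : x (n - 1) ∉ S) (hu : x i ∉ S) (hv : x (i + 1) ∉ S) :
    ∀ t < n, x t ∉ S := by
  have hexit : ∀ j a b, j + 1 < n → s(x a, x b) = s(x j, x (j + 1)) → b < n →
      x a ∈ S → x b ∉ S → b = i ∨ b = i + 1 := by
    intro j a b hj he hb ha hbS
    by_contra hne
    obtain ⟨hbi, hbi'⟩ := not_or.1 hne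
    exact hnc j hj (he ▸ hS _ ha _ hbS (fun h => hbi (hx hb (by simp; omega) h))
      (fun h => hbi' (hx hb hi h)))
  intro t ht
  refine forall_not_of_switches_near (p := fun t => x t ∈ S) h0 hlast hu hv ?_ t (by omega)
  intro j hj hsw
  by_cases hjS : x j ∈ S
  · rcases hexit j j (j + 1) (by omega) rfl (by omega) hjS (hsw.1 hjS) with h | h
    · exact Or.inl h
    · exact absurd (Nat.succ_injective h ▸ hjS) hu
  · have hj1 : x (j + 1) ∈ S := not_not.1 (mt hsw.2 hjS)
    rcases hexit j (j + 1) j (by omega) Sym2.eq_swap (by omega) hj1 hjS with rfl | h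
    · exact absurd hj1 hv
    · exact Or.inr h

end Chords

theorem path_edges_border_or_traversing_general {n : ℕ}
    (x : ℕ → Fin n) (hx : Function.Bijective (fun j : Fin n => x (j : ℕ)))
    (hnc : ∀ i j : ℕ, i + 1 < n → j + 1 < n →
      ¬ Cross s(x i, x (i + 1)) s(x j, x (j + 1))) :
    ∀ i : ℕ, i + 1 < n →
      IsBorder s(x i, x (i + 1)) ∨
        ((InArc (x 0) (x (n - 1)) (x i) ∧ InArc (x (n - 1)) (x 0) (x (i + 1))) ∨
         (InArc (x (n - 1)) (x 0) (x i) ∧ InArc (x 0) (x (n - 1)) (x (i + 1)))) := by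
  intro i hi
  refine or_iff_not_imp_right.2 fun htrav => ?_
  have hinj : Set.InjOn x (Set.Iio n) := fun a ha b hb h =>
    congrArg Fin.val (hx.1 (a₁ := ⟨a, ha⟩) (a₂ := ⟨b, hb⟩) h)
  have hsurj : ∀ w, ∃ t < n, x t = w := fun w =>
    let ⟨t, ht⟩ := hx.2 w
    ⟨t, t.2, ht⟩
  have hside := strictlyBetween_iff_of_not_traverses htrav
  by_cases hA : StrictlyBetween (x i) (x (i + 1)) (x 0)
  · refine isBorder_of_forall_strictlyBetween_or_eq fun w => ?_
    obtain ⟨t, ht, rfl⟩ := hsurj w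
    by_contra hw
    refine not_mem_of_noncrossing_path hinj hi (hnc i · hi)
      {w | ¬ StrictlyBetween (x i) (x (i + 1)) w ∧ w ≠ x i ∧ w ≠ x (i + 1)}
      (fun c hc d hd hdu hdv => cross_of_not_strictlyBetween hc.1 hc.2.1 hc.2.2
        (not_not.1 fun hd' => hd ⟨hd', hdu, hdv⟩))
      (fun h => h.1 hA) (fun h => h.1 (hside.1 hA)) (fun h => h.2.1 rfl) (fun h => h.2.2 rfl)
      t ht (not_or.1 hw |>.imp_right not_or.1)
  · have huv : x i ≠ x (i + 1) := fun h => by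
      have := hinj (show i < n by omega) hi h
      omega
    refine isBorder_of_forall_not_strictlyBetween huv fun w hw => ?_
    obtain ⟨t, ht, rfl⟩ := hsurj w
    refine not_mem_of_noncrossing_path hinj hi (hnc i · hi)
      {w | StrictlyBetween (x i) (x (i + 1)) w}
      (fun c hc d hd hdu hdv => cross_of_strictlyBetween hc hd hdu hdv)
      hA (mt hside.2 hA) ?_ ?_ t ht hw
    all_goals simp [StrictlyBetween]

/-- For a non-crossing Hamiltonian path `x 0, …, x (n-1)`, every edge of the path is
either a border edge, or has one endpoint in the closed top arc (from `x 0` to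
`x (n-1)`) and the other in the closed bottom arc. -/
theorem path_edges_border_or_traversing {n : ℕ} (hn : 1 ≤ n)
    (x : ℕ → Fin n) (hx : Function.Bijective (fun j : Fin n => x (j : ℕ)))
    (hnc : ∀ i j : ℕ, i + 1 < n → j + 1 < n →
      ¬ Cross s(x i, x (i + 1)) s(x j, x (j + 1))) :
    ∀ i : ℕ, i + 1 < n →
      IsBorder s(x i, x (i + 1)) ∨
        ((InArc (x 0) (x (n - 1)) (x i) ∧ InArc (x (n - 1)) (x 0) (x (i + 1))) ∨
         (InArc (x (n - 1)) (x 0) (x i) ∧ InArc (x 0) (x (n - 1)) (x (i + 1)))) :=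
  path_edges_border_or_traversing_general x hx hnc
end

section
/- If two non-crossing spanning trees T₁, T₂ on n points in convex position share k common border edges and (after relabeling) T₁ contains all border edges {v_j, v_{j+1}} for j < i while T₂ has no edge with both endpoints in {v_{i+1},…,v_n}, then the flip sequence produced by repeatedly applying 'good flips' has length exactly |T₁ Δ T₂|/2 ≤ n − 1 − k. -/
open Finset

namespace NCSTProof
open scoped Classical

variable {n : ℕ}

/-- connectivity within an edge set -/
def Conn (E : Finset (Edge n)) (x y : Fin n) : Prop :=
  Relation.ReflTransGen (fun a b => a ≠ b ∧ s(a, b) ∈ E) x y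

lemma Conn.rfl {E : Finset (Edge n)} {x : Fin n} : Conn E x x := Relation.ReflTransGen.refl

lemma conn_step {E : Finset (Edge n)} {x y : Fin n} (h : x ≠ y) (he : s(x,y) ∈ E) :
    Conn E x y := Relation.ReflTransGen.single ⟨h, he⟩

lemma Conn.trans {E : Finset (Edge n)} {x y z : Fin n} (h : Conn E x y) (h' : Conn E y z) :
    Conn E x z := Relation.ReflTransGen.trans h h'

lemma conn_symm {E : Finset (Edge n)} {x y : Fin n} (h : Conn E x y) : Conn E y x := by
  induction h with
  | refl => exact Conn.rfl
  | tail _ h2 ih => exact Conn.trans (conn_step (Ne.symm h2.1) (by rw [Sym2.eq_swap]; exact h2.2)) ih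

lemma conn_mono {E F : Finset (Edge n)} (hEF : E ⊆ F) {x y : Fin n} (h : Conn E x y) :
    Conn F x y := by
  induction h with
  | refl => exact Conn.rfl
  | tail _ h2 ih => exact Conn.trans ih (conn_step h2.1 (hEF h2.2))

/-- surgery: removing an edge -/
lemma conn_surgery {E : Finset (Edge n)} {p q x y : Fin n} (h : Conn E x y) :
    Conn (E.erase s(p,q)) x y ∨
      ((Conn (E.erase s(p,q)) x p ∨ Conn (E.erase s(p,q)) x q) ∧
       (Conn (E.erase s(p,q)) y p ∨ Conn (E.erase s(p,q)) y q)) := by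
  set e := s(p,q) with he
  induction h with
  | refl => left; exact Conn.rfl
  | @tail b c h1 h2 ih =>
    by_cases hbc : s(b, c) = e
    · -- {b,c} = {p,q}
      rw [he, Sym2.eq_iff] at hbc
      rcases ih with ih | ⟨ihx, _⟩
      · right
        constructor
        · rcases hbc with ⟨h1', _⟩ | ⟨h1', _⟩
          · left; exact ih.trans (h1' ▸ Conn.rfl)
          · right; exact ih.trans (h1' ▸ Conn.rfl)
        · rcases hbc with ⟨_, h2'⟩ | ⟨_, h2'⟩
          · right; exact h2' ▸ Conn.rfl
          · left; exact h2' ▸ Conn.rfl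
      · right
        refine ⟨ihx, ?_⟩
        rcases hbc with ⟨_, h2'⟩ | ⟨_, h2'⟩
        · right; exact h2' ▸ Conn.rfl
        · left; exact h2' ▸ Conn.rfl
    · have hstep : Conn (E.erase e) b c :=
        conn_step h2.1 (Finset.mem_erase.mpr ⟨hbc, h2.2⟩)
      rcases ih with ih | ⟨ihx, ihy⟩
      · left; exact ih.trans hstep
      · right
        refine ⟨ihx, ?_⟩
        rcases ihy with ihy | ihy
        · left; exact (conn_symm hstep).trans ihy
        · right; exact (conn_symm hstep).trans ihy

/-- cover: after deleting an edge of a connected set, everything reaches an endpoint -/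
lemma conn_cover {E : Finset (Edge n)} {p q x y : Fin n} (h : Conn E x y)
    (hxp : Conn E y p) :
    Conn (E.erase s(p,q)) x p ∨ Conn (E.erase s(p,q)) x q := by
  rcases conn_surgery (E := E) (p := p) (q := q) (h.trans hxp) with h' | ⟨hx, _⟩
  · left; exact h'
  · exact hx

end NCSTProof

namespace NCSTProof2
open NCSTProof
open scoped Classical
variable {n : ℕ}

lemma edge_repr (e : Edge n) (hnd : ¬ e.IsDiag) : ∃ p q : Fin n, p ≠ q ∧ e = s(p,q) := by
  induction e using Sym2.inductionOn with
  | hf p q => exact ⟨p, q, fun h => hnd (by simp [h, Sym2.isDiag_iff_proj_eq]), rfl⟩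

lemma edge_repr_lt (e : Edge n) (hnd : ¬ e.IsDiag) : ∃ p q : Fin n, p < q ∧ e = s(p,q) := by
  obtain ⟨p, q, hne, he⟩ := edge_repr e hnd
  rcases lt_or_gt_of_ne hne with h | h
  · exact ⟨p, q, h, he⟩
  · exact ⟨q, p, h, he.trans (Sym2.eq_swap)⟩

lemma conn_transfer {E F : Finset (Edge n)}
    (h : ∀ a b : Fin n, a ≠ b → s(a,b) ∈ E → Conn F a b) {x y : Fin n} :
    Conn E x y → Conn F x y := by
  intro hc
  induction hc with
  | refl => exact Conn.rfl
  | tail _ h2 ih => exact ih.trans (h _ _ h2.1 h2.2)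

/-- components are no bigger than internal edge count plus one -/
lemma conn_count (k : ℕ) : ∀ E : Finset (Edge n), E.card ≤ k → (∀ e ∈ E, ¬ e.IsDiag) →
    ∀ u : Fin n,
    (univ.filter (fun z => Conn E z u)).card ≤
      (E.filter (fun e => ∀ z ∈ e, Conn E z u)).card + 1 := by
  induction k with
  | zero =>
    intro E hE _ u
    have hE0 : E = ∅ := Finset.card_eq_zero.mp (Nat.le_zero.mp hE)
    subst hE0
    have : (univ.filter (fun z => Conn (∅ : Finset (Edge n)) z u)) = {u} := by
      ext z
      simp only [Finset.mem_filter, Finset.mem_univ, true_and, Finset.mem_singleton]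
      constructor
      · intro h
        rcases (Relation.reflTransGen_iff_eq (by rintro c ⟨_, hc⟩; exact absurd hc (by simp))).mp h with h
        exact h.symm
      · rintro rfl; exact Conn.rfl
    rw [this]; simp
  | succ k ih =>
    intro E hE hnd u
    by_cases hex : ∃ e ∈ E, ∀ z ∈ e, Conn E z u
    · obtain ⟨e, he, hall⟩ := hex
      obtain ⟨p, q, hpq, rfl⟩ := edge_repr e (hnd e he)
      have hpu : Conn E p u := hall p (Sym2.mem_mk_left p q)
      have hqu : Conn E q u := hall q (Sym2.mem_mk_right p q)
      set E' := E.erase s(p,q) with hE'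
      have hE'card : E'.card ≤ k := by
        have h1 : E'.card = E.card - 1 := Finset.card_erase_of_mem he
        have h2 : 0 < E.card := Finset.card_pos.mpr ⟨_, he⟩
        omega
      have hnd' : ∀ e ∈ E', ¬ e.IsDiag := fun e heE' => hnd e (Finset.mem_of_mem_erase heE')
      by_cases hpq' : Conn E' p q
      · -- component unchanged
        have hpu' : Conn E' p u := by
          rcases conn_surgery (p := p) (q := q) hpu with h | ⟨_, hu⟩
          · exact h
          · rcases hu with hu | hu
            · exact conn_symm hu
            · exact hpq'.trans (conn_symm hu)
        have hcomp : ∀ z, Conn E z u ↔ Conn E' z u := by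
          intro z
          constructor
          · intro h
            rcases conn_surgery (p := p) (q := q) h with h | ⟨hz, _⟩
            · exact h
            · rcases hz with hz | hz
              · exact hz.trans hpu'
              · exact hz.trans ((conn_symm hpq').trans hpu')
          · exact conn_mono (Finset.erase_subset _ _)
        have h1 : (univ.filter (fun z => Conn E z u)) =
            (univ.filter (fun z => Conn E' z u)) := by
          apply Finset.filter_congr; intro z _; simp [hcomp z]
        have h2 := ih E' hE'card hnd' u
        have h3 : insert s(p,q) (E'.filter (fun e => ∀ z ∈ e, Conn E' z u)) ⊆
            E.filter (fun e => ∀ z ∈ e, Conn E z u) := by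
          intro e' he'
          rcases Finset.mem_insert.mp he' with rfl | he'
          · exact Finset.mem_filter.mpr ⟨he, hall⟩
          · have h4 := Finset.mem_filter.mp he'
            exact Finset.mem_filter.mpr ⟨Finset.mem_of_mem_erase h4.1,
              fun z hz => conn_mono (Finset.erase_subset _ _) (h4.2 z hz)⟩
        have h5 : s(p,q) ∉ E'.filter (fun e => ∀ z ∈ e, Conn E' z u) := by
          intro hmem
          exact (Finset.notMem_erase _ _) (Finset.mem_filter.mp hmem).1
        calc (univ.filter (fun z => Conn E z u)).card
            = (univ.filter (fun z => Conn E' z u)).card := by rw [h1]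
          _ ≤ (E'.filter (fun e => ∀ z ∈ e, Conn E' z u)).card + 1 := h2
          _ = (insert s(p,q) (E'.filter (fun e => ∀ z ∈ e, Conn E' z u))).card := by
              rw [Finset.card_insert_of_notMem h5]
          _ ≤ (E.filter (fun e => ∀ z ∈ e, Conn E z u)).card := Finset.card_le_card h3
          _ ≤ _ := Nat.le_succ _
      · -- component splits
        have hsub : (univ.filter (fun z => Conn E z u)) ⊆
            (univ.filter (fun z => Conn E' z p)) ∪ (univ.filter (fun z => Conn E' z q)) := by
          intro z hz
          have hz' : Conn E z p := ((Finset.mem_filter.mp hz).2).trans (conn_symm hpu)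
          rcases conn_surgery (p := p) (q := q) hz' with h | ⟨hz2, _⟩
          · exact Finset.mem_union_left _ (Finset.mem_filter.mpr ⟨Finset.mem_univ _, h⟩)
          · rcases hz2 with h | h
            · exact Finset.mem_union_left _ (Finset.mem_filter.mpr ⟨Finset.mem_univ _, h⟩)
            · exact Finset.mem_union_right _ (Finset.mem_filter.mpr ⟨Finset.mem_univ _, h⟩)
        have hdis : Disjoint (univ.filter (fun z => Conn E' z p))
            (univ.filter (fun z => Conn E' z q)) := by
          rw [Finset.disjoint_left]
          intro z hz1 hz2
          exact hpq' ((conn_symm (Finset.mem_filter.mp hz1).2).trans (Finset.mem_filter.mp hz2).2)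
        have hc1 := ih E' hE'card hnd' p
        have hc2 := ih E' hE'card hnd' q
        set Cp := E'.filter (fun e => ∀ z ∈ e, Conn E' z p) with hCp
        set Cq := E'.filter (fun e => ∀ z ∈ e, Conn E' z q) with hCq
        have hdisC : Disjoint Cp Cq := by
          rw [Finset.disjoint_left]
          intro e' h1 h2
          obtain ⟨r, s, _, rfl⟩ := edge_repr e' (hnd' e' (Finset.mem_filter.mp h1).1)
          have hr1 := (Finset.mem_filter.mp h1).2 r (Sym2.mem_mk_left r s)
          have hr2 := (Finset.mem_filter.mp h2).2 r (Sym2.mem_mk_left r s)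
          exact hpq' ((conn_symm hr1).trans hr2)
        have hsubC : insert s(p,q) (Cp ∪ Cq) ⊆
            E.filter (fun e => ∀ z ∈ e, Conn E z u) := by
          intro e' he'
          rcases Finset.mem_insert.mp he' with rfl | he'
          · exact Finset.mem_filter.mpr ⟨he, hall⟩
          · rcases Finset.mem_union.mp he' with h1 | h1
            · have h4 := Finset.mem_filter.mp h1
              exact Finset.mem_filter.mpr ⟨Finset.mem_of_mem_erase h4.1,
                fun z hz => (conn_mono (Finset.erase_subset _ _) (h4.2 z hz)).trans hpu⟩
            · have h4 := Finset.mem_filter.mp h1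
              exact Finset.mem_filter.mpr ⟨Finset.mem_of_mem_erase h4.1,
                fun z hz => (conn_mono (Finset.erase_subset _ _) (h4.2 z hz)).trans hqu⟩
        have h5 : s(p,q) ∉ Cp ∪ Cq := by
          intro hmem
          rcases Finset.mem_union.mp hmem with h | h
          · exact (Finset.notMem_erase _ _) (Finset.mem_filter.mp h).1
          · exact (Finset.notMem_erase _ _) (Finset.mem_filter.mp h).1
        calc (univ.filter (fun z => Conn E z u)).card
            ≤ ((univ.filter (fun z => Conn E' z p)) ∪
                (univ.filter (fun z => Conn E' z q))).card := Finset.card_le_card hsub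
          _ = (univ.filter (fun z => Conn E' z p)).card +
                (univ.filter (fun z => Conn E' z q)).card := Finset.card_union_of_disjoint hdis
          _ ≤ (Cp.card + 1) + (Cq.card + 1) := Nat.add_le_add hc1 hc2
          _ = (Cp ∪ Cq).card + 2 := by rw [Finset.card_union_of_disjoint hdisC]; omega
          _ = (insert s(p,q) (Cp ∪ Cq)).card + 1 := by rw [Finset.card_insert_of_notMem h5]
          _ ≤ (E.filter (fun e => ∀ z ∈ e, Conn E z u)).card + 1 :=
              Nat.add_le_add_right (Finset.card_le_card hsubC) 1
    · -- no internal edge: component is a single point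
      have : (univ.filter (fun z => Conn E z u)) = {u} := by
        ext z
        simp only [Finset.mem_filter, Finset.mem_univ, true_and, Finset.mem_singleton]
        constructor
        · intro h
          rcases (Relation.ReflTransGen.cases_head h) with rfl | ⟨c, hc, htail⟩
          · rfl
          · exfalso
            apply hex
            refine ⟨s(z,c), hc.2, ?_⟩
            intro w hw
            rcases Sym2.mem_iff.mp hw with rfl | rfl
            · exact h
            · exact htail
        · rintro rfl; exact Conn.rfl
      rw [this]; simp
  
end NCSTProof2

namespace NCSTProof3
open NCSTProof NCSTProof2
open scoped Classical
variable {n : ℕ}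

/-- in a connected graph with n-1 edges every edge is a bridge -/
lemma tree_bridge {T : Finset (Edge n)} (hconn : ∀ x y, Conn T x y)
    (hcard : T.card + 1 = n) (hnd : ∀ e ∈ T, ¬ e.IsDiag) {u v : Fin n}
    (huv : u ≠ v) (he : s(u,v) ∈ T) : ¬ Conn (T.erase s(u,v)) u v := by
  intro h
  have hall : ∀ x y, Conn (T.erase s(u,v)) x y := by
    intro x y
    refine conn_transfer ?_ (hconn x y)
    intro a b hab hmem
    by_cases heq : s(a,b) = s(u,v)
    · rcases Sym2.eq_iff.mp heq with ⟨rfl, rfl⟩ | ⟨rfl, rfl⟩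
      · exact h
      · exact conn_symm h
    · exact conn_step hab (Finset.mem_erase.mpr ⟨heq, hmem⟩)
  have hcount := conn_count (n := n) (T.erase s(u,v)).card (T.erase s(u,v)) le_rfl
    (fun e he' => hnd e (Finset.mem_of_mem_erase he')) u
  have h1 : (univ.filter (fun z => Conn (T.erase s(u,v)) z u)) = univ := by
    apply Finset.filter_true_of_mem
    intro z _
    exact hall z u
  rw [h1] at hcount
  have h2 : (Finset.univ : Finset (Fin n)).card = n := Finset.card_univ.trans (Fintype.card_fin n)
  have h3 : ((T.erase s(u,v)).filter (fun e => ∀ z ∈ e, Conn (T.erase s(u,v)) z u)).card ≤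
      (T.erase s(u,v)).card := Finset.card_le_card (Finset.filter_subset _ _)
  have h4 : (T.erase s(u,v)).card = T.card - 1 := Finset.card_erase_of_mem he
  have h5 : 0 < T.card := Finset.card_pos.mpr ⟨_, he⟩
  omega

lemma exists_min_conn (k : ℕ) : ∀ T : Finset (Edge n), T.card ≤ k → ∀ a b : Fin n,
    Conn T a b → ∃ S, S ⊆ T ∧ Conn S a b ∧ ∀ e ∈ S, ¬ Conn (S.erase e) a b := by
  induction k with
  | zero =>
    intro T hT a b h
    exact ⟨T, Finset.Subset.refl _, h, fun e he => absurd (Finset.card_pos.mpr ⟨_, he⟩)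
      (by omega)⟩
  | succ k ih =>
    intro T hT a b h
    by_cases hx : ∃ e ∈ T, Conn (T.erase e) a b
    · obtain ⟨e, he, h'⟩ := hx
      have hc : (T.erase e).card ≤ k := by
        have := Finset.card_erase_of_mem he
        have := Finset.card_pos.mpr ⟨_, he⟩
        omega
      obtain ⟨S, hS, h1, h2⟩ := ih (T.erase e) hc a b h'
      exact ⟨S, hS.trans (Finset.erase_subset _ _), h1, h2⟩
    · push_neg at hx
      exact ⟨T, Finset.Subset.refl _, h, hx⟩

/-- exchange: add edge s(a,b), remove an edge outside A, stay connected -/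
lemma swap_lemma {T A : Finset (Edge n)} (hconn : ∀ x y, Conn T x y)
    (hcard : T.card + 1 = n) (hnd : ∀ e ∈ T, ¬ e.IsDiag) {a b : Fin n} (hab : a ≠ b)
    (hsep : ¬ Conn (T ∩ A) a b) :
    ∃ e ∈ T, e ∉ A ∧ ∀ x y, Conn (insert s(a,b) (T.erase e)) x y := by
  obtain ⟨S, hST, hSab, hSmin⟩ := exists_min_conn T.card T le_rfl a b (hconn a b)
  have hSA : ¬ (S ⊆ A) := by
    intro hSA
    exact hsep (conn_mono (fun e he => Finset.mem_inter.mpr ⟨hST he, hSA he⟩) hSab)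
  obtain ⟨e, heS, heA⟩ := Finset.not_subset.mp hSA
  have heT : e ∈ T := hST heS
  obtain ⟨u, v, huv, rfl⟩ := edge_repr e (hnd e heT)
  have hbridge := tree_bridge hconn hcard hnd huv heT
  -- a and b are separated by removing e from T
  have hTab : ¬ Conn (T.erase s(u,v)) a b := by
    intro hTab
    rcases conn_surgery (p := u) (q := v) hSab with h1 | ⟨ha', hb'⟩
    · exact hSmin _ heS h1
    · have hmono : ∀ {x y : Fin n}, Conn (S.erase s(u,v)) x y → Conn (T.erase s(u,v)) x y :=
        fun h => conn_mono (Finset.erase_subset_erase _ hST) h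
      rcases ha' with ha' | ha' <;> rcases hb' with hb' | hb'
      · exact hSmin _ heS (ha'.trans (conn_symm hb'))
      · exact hbridge ((conn_symm (hmono ha')).trans (hTab.trans (hmono hb')))
      · exact hbridge ((conn_symm (hmono hb')).trans ((conn_symm hTab).trans (hmono ha')))
      · exact hSmin _ heS (ha'.trans (conn_symm hb'))
  have hcover : ∀ x : Fin n, Conn (T.erase s(u,v)) x u ∨ Conn (T.erase s(u,v)) x v := by
    intro x
    rcases conn_surgery (p := u) (q := v) (hconn x u) with h1 | ⟨hx, _⟩
    · exact Or.inl h1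
    · exact hx
  -- final connectivity
  refine ⟨s(u,v), heT, heA, ?_⟩
  set T'' := insert s(a,b) (T.erase s(u,v)) with hT''
  have hmono2 : ∀ {x y : Fin n}, Conn (T.erase s(u,v)) x y → Conn T'' x y :=
    fun h => conn_mono (Finset.subset_insert _ _) h
  have hstep : Conn T'' a b := conn_step hab (Finset.mem_insert_self _ _)
  have hkey : ∀ x : Fin n, Conn T'' x a := by
    rcases hcover a with ha | ha <;> rcases hcover b with hb | hb
    · exact absurd (ha.trans (conn_symm hb)) hTab
    · intro x
      rcases hcover x with hx | hx
      · exact (hmono2 hx).trans (conn_symm (hmono2 ha))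
      · exact ((hmono2 hx).trans (conn_symm (hmono2 hb))).trans (conn_symm hstep)
    · intro x
      rcases hcover x with hx | hx
      · exact ((hmono2 hx).trans (conn_symm (hmono2 hb))).trans (conn_symm hstep)
      · exact (hmono2 hx).trans (conn_symm (hmono2 ha))
    · exact absurd (ha.trans (conn_symm hb)) hTab
  intro x y
  exact (hkey x).trans (conn_symm (hkey y))

/-- interface with SimpleGraph -/
lemma conn_of_connected {T : Finset (Edge n)}
    (h : (SimpleGraph.fromEdgeSet (T : Set (Edge n))).Connected) (x y : Fin n) :
    Conn T x y := by
  obtain ⟨w⟩ := h.preconnected x y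
  clear h
  induction w with
  | nil => exact Conn.rfl
  | cons h p ih =>
    rename_i a c _
    have h' := (SimpleGraph.fromEdgeSet_adj _).mp h
    exact Conn.trans (conn_step h'.2 h'.1) ih

lemma connected_of_conn {T : Finset (Edge n)} (hne : 0 < n)
    (h : ∀ x y, Conn T x y) :
    (SimpleGraph.fromEdgeSet (T : Set (Edge n))).Connected := by
  have hnon : Nonempty (Fin n) := ⟨⟨0, hne⟩⟩
  refine ⟨fun x y => ?_⟩
  have hxy := h x y
  induction hxy with
  | refl => exact SimpleGraph.Reachable.refl _
  | tail _ h2 ih =>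
    exact ih.trans (SimpleGraph.Adj.reachable
      ((SimpleGraph.fromEdgeSet_adj _).mpr ⟨h2.2, h2.1⟩))

end NCSTProof3

namespace NCSTProof4
open NCSTProof NCSTProof2 NCSTProof3
variable {n : ℕ}

lemma cross_norm {a b c d : Fin n} (hab : a < b) (hcd : c < d) :
    Cross s(a,b) s(c,d) ↔ ((a < c ∧ c < b ∧ b < d) ∨ (c < a ∧ a < d ∧ d < b)) := by
  constructor
  · rintro ⟨x, y, z, w, h1, h2, hxy, hzw, hpat⟩
    have hab' : x = a ∧ y = b := by
      rcases Sym2.eq_iff.mp h1.symm with ⟨rfl, rfl⟩ | ⟨rfl, rfl⟩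
      · exact ⟨rfl, rfl⟩
      · exact absurd hxy (not_lt.mpr hab.le)
    have hcd' : z = c ∧ w = d := by
      rcases Sym2.eq_iff.mp h2.symm with ⟨rfl, rfl⟩ | ⟨rfl, rfl⟩
      · exact ⟨rfl, rfl⟩
      · exact absurd hzw (not_lt.mpr hcd.le)
    obtain ⟨rfl, rfl⟩ := hab'
    obtain ⟨rfl, rfl⟩ := hcd'
    exact hpat
  · intro h
    exact ⟨a, b, c, d, rfl, rfl, hab, hcd, h⟩

lemma cross_self_false (e : Edge n) : ¬ Cross e e := by
  rintro ⟨x, y, z, w, h1, h2, hxy, hzw, hpat⟩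
  rw [h1] at h2
  rcases Sym2.eq_iff.mp h2 with ⟨rfl, rfl⟩ | ⟨rfl, rfl⟩
  · rcases hpat with ⟨h, _, _⟩ | ⟨h, _, _⟩ <;> exact lt_irrefl _ h
  · exact absurd (hxy.trans hzw) (lt_irrefl _)

/-- border edges cross nothing (x, x+1 adjacent) -/
lemma border_no_cross {x y : Fin n} (hy : (y : ℕ) = (x : ℕ) + 1) (e : Edge n) :
    ¬ Cross s(x,y) e ∧ ¬ Cross e s(x,y) := by
  constructor
  · rintro ⟨a, b, c, d, h1, h2, hab, hcd, hpat⟩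
    have hxy : x < y := by rw [Fin.lt_def]; omega
    have h' : a = x ∧ b = y := by
      rcases Sym2.eq_iff.mp h1.symm with ⟨rfl, rfl⟩ | ⟨rfl, rfl⟩
      · exact ⟨rfl, rfl⟩
      · exact absurd hab (not_lt.mpr hxy.le)
    obtain ⟨rfl, rfl⟩ := h'
    rw [Fin.lt_def] at hab hcd
    rcases hpat with ⟨h3, h4, _⟩ | ⟨_, h3, h4⟩ <;> rw [Fin.lt_def] at h3 h4 <;> omega
  · rintro ⟨a, b, c, d, h1, h2, hab, hcd, hpat⟩
    have hxy : x < y := by rw [Fin.lt_def]; omega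
    have h' : c = x ∧ d = y := by
      rcases Sym2.eq_iff.mp h2.symm with ⟨rfl, rfl⟩ | ⟨rfl, rfl⟩
      · exact ⟨rfl, rfl⟩
      · exact absurd hcd (not_lt.mpr hxy.le)
    obtain ⟨rfl, rfl⟩ := h'
    rw [Fin.lt_def] at hab hcd
    rcases hpat with ⟨h3, h4, h5⟩ | ⟨h3, h4, h5⟩ <;> rw [Fin.lt_def] at h3 h4 h5 <;> omega

end NCSTProof4

namespace NCSTProof5
open NCSTProof NCSTProof2 NCSTProof3 NCSTProof4 Finset
open scoped Classical
variable {n : ℕ}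

lemma HC (k : ℕ) : ∀ (i : ℕ), n - i ≤ k → 1 ≤ i → i < n →
    ∀ T T₂ : Finset (Edge n),
    (∀ x y, Conn T x y) → (∀ x y, Conn T₂ x y) →
    T.card + 1 = n → T₂.card + 1 = n →
    (∀ e ∈ T, ¬ e.IsDiag) → (∀ e ∈ T₂, ¬ e.IsDiag) →
    (∀ e ∈ T, ∀ f ∈ T, ¬ Cross e f) → (∀ e ∈ T₂, ∀ f ∈ T₂, ¬ Cross e f) →
    (∀ x y : Fin n, (x:ℕ) < i → (y:ℕ) < i → (s(x,y) ∈ T ↔ s(x,y) ∈ T₂)) →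
    (∀ x y : Fin n, (x:ℕ) < i → (y:ℕ) < i →
      Conn (T.filter (fun e => ∀ z ∈ e, (z:ℕ) < i)) x y) →
    (∀ x y : Fin n, s(x,y) ∈ T₂ → (x:ℕ) < i ∨ (y:ℕ) < i) →
    T ≠ T₂ →
    ∃ a v : Fin n, (a:ℕ) < i ∧ i ≤ (v:ℕ) ∧ s(a,v) ∈ T₂ ∧ s(a,v) ∉ T ∧
      ∀ g ∈ T, ¬ Cross s(a,v) g ∧ ¬ Cross g s(a,v) := by
  induction k with
  | zero => intro i hk h1 h2; omega
  | succ k ih =>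
    intro i hk hi1 hin T T₂ hTconn hT₂conn hTcard hT₂card hTnd hT₂nd hTnc hT₂nc
      hagree hblob hleft hne
    -- blob transfer lemmas
    have hblobT : ∀ (b : Edge n), (∃ z ∈ b, i ≤ (z:ℕ)) → ∀ x y : Fin n,
        (x:ℕ) < i → (y:ℕ) < i → Conn (T.erase b) x y := by
      intro b hb x y hx hy
      refine conn_mono ?_ (hblob x y hx hy)
      intro e he
      have he' := Finset.mem_filter.mp he
      refine Finset.mem_erase.mpr ⟨?_, he'.1⟩
      rintro rfl
      obtain ⟨z, hz, hz2⟩ := hb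
      exact absurd (he'.2 z hz) (by omega)
    have hTofLeft : ∀ x y : Fin n, (x:ℕ) < i → (y:ℕ) < i → s(x,y) ∈ T → s(x,y) ∈ T₂ :=
      fun x y hx hy h => (hagree x y hx hy).mp h
    have hblobT₂ : ∀ (b : Edge n), (∃ z ∈ b, i ≤ (z:ℕ)) → ∀ x y : Fin n,
        (x:ℕ) < i → (y:ℕ) < i → Conn (T₂.erase b) x y := by
      intro b hb x y hx hy
      refine conn_mono ?_ (hblob x y hx hy)
      intro e he
      have he' := Finset.mem_filter.mp he
      obtain ⟨p, q, hpq, rfl⟩ := edge_repr e (hTnd e he'.1)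
      have hp := he'.2 p (Sym2.mem_mk_left p q)
      have hq := he'.2 q (Sym2.mem_mk_right p q)
      refine Finset.mem_erase.mpr ⟨?_, hTofLeft p q hp hq he'.1⟩
      rintro rfl
      obtain ⟨z, hz, hz2⟩ := hb
      rcases Sym2.mem_iff.mp hz with rfl | rfl <;> omega
    -- anchors
    have hanchor : ∀ v : Fin n, ∃ a : Fin n, i ≤ (v:ℕ) → ((a:ℕ) < i ∧ s(a,v) ∈ T₂) := by
      intro v
      by_cases hv : i ≤ (v:ℕ)
      · have h0 : (⟨0, by omega⟩ : Fin n) ≠ v := by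
          intro h
          have := congrArg Fin.val h
          simp at this
          omega
        have hc := hT₂conn v ⟨0, by omega⟩
        rcases Relation.ReflTransGen.cases_head hc with heq | ⟨c, hc1, _⟩
        · exact absurd heq.symm h0
        · rcases hleft v c hc1.2 with h | h
          · omega
          · exact ⟨c, fun _ => ⟨h, by rw [Sym2.eq_swap]; exact hc1.2⟩⟩
      · exact ⟨v, fun h => absurd h hv⟩
    choose A hA using hanchor
    have hAlt : ∀ v : Fin n, i ≤ (v:ℕ) → (A v : ℕ) < i := fun v hv => (hA v hv).1
    have hAmem : ∀ v : Fin n, i ≤ (v:ℕ) → s(A v, v) ∈ T₂ := fun v hv => (hA v hv).2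
    -- anchor uniqueness
    have hAuniq : ∀ (v x : Fin n), i ≤ (v:ℕ) → (x:ℕ) < i → s(x,v) ∈ T₂ → x = A v := by
      intro v x hv hx hmem
      by_contra hxa
      have hxv : x ≠ v := by intro h; rw [h] at hx; omega
      have havv : (A v) ≠ v := by
        intro h
        have := hAlt v hv; rw [h] at this; omega
      have hbr := tree_bridge hT₂conn hT₂card hT₂nd havv (hAmem v hv)
      apply hbr
      have h1 : Conn (T₂.erase s(A v, v)) (A v) x :=
        hblobT₂ s(A v, v) ⟨v, Sym2.mem_mk_right _ _, hv⟩ _ _ (hAlt v hv) hx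
      have h2 : s(x, v) ∈ T₂.erase s(A v, v) := by
        refine Finset.mem_erase.mpr ⟨?_, hmem⟩
        intro h
        rcases Sym2.eq_iff.mp h with ⟨h1', _⟩ | ⟨h1', h2'⟩
        · exact hxa h1'
        · rw [h1'] at hx; omega
      exact h1.trans (conn_step hxv h2)
    -- unique gap per right endpoint
    have hGapUniq : ∀ p q p' : Fin n, (p:ℕ) < i → (p':ℕ) < i → i ≤ (q:ℕ) →
        s(p,q) ∈ T → s(p',q) ∈ T → p = p' := by
      intro p q p' hp hp' hq hm hm'
      by_contra hne'
      have hpq : p ≠ q := by intro h; rw [h] at hp; omega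
      have hbr := tree_bridge hTconn hTcard hTnd hpq hm
      apply hbr
      have h1 : Conn (T.erase s(p,q)) p p' :=
        hblobT s(p,q) ⟨q, Sym2.mem_mk_right _ _, hq⟩ _ _ hp hp'
      have h2 : s(p', q) ∈ T.erase s(p,q) := by
        refine Finset.mem_erase.mpr ⟨?_, hm'⟩
        intro h
        rcases Sym2.eq_iff.mp h with ⟨h1', _⟩ | ⟨h1', h2'⟩
        · exact hne' h1'.symm
        · rw [h2'] at hq; omega
      have hp'q : p' ≠ q := by intro h; rw [h] at hp'; omega
      exact h1.trans (conn_step hp'q h2)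
    -- anchors are monotone
    have hAmono : ∀ v w : Fin n, i ≤ (v:ℕ) → i ≤ (w:ℕ) → (v:ℕ) ≤ (w:ℕ) →
        (A w : ℕ) ≤ (A v : ℕ) := by
      intro v w hv hw hvw
      by_contra hc
      push_neg at hc
      rcases Nat.eq_or_lt_of_le hvw with heq | hlt
      · have : v = w := Fin.ext heq
        rw [this] at hc; omega
      · have hcr : Cross s(A v, v) s(A w, w) := by
          rw [cross_norm (by rw [Fin.lt_def]; have := hAlt v hv; omega)
            (by rw [Fin.lt_def]; have := hAlt w hw; omega)]
          left
          refine ⟨by rw [Fin.lt_def]; omega, by rw [Fin.lt_def]; have := hAlt w hw; omega,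
            by rw [Fin.lt_def]; omega⟩
        exact hT₂nc _ (hAmem v hv) _ (hAmem w hw) hcr
    -- gap nesting
    have hGapNest : ∀ p q p' q' : Fin n, (p:ℕ) < i → i ≤ (q:ℕ) → (p':ℕ) < i → i ≤ (q':ℕ) →
        s(p,q) ∈ T → s(p',q') ∈ T → (q:ℕ) < (q':ℕ) → (p':ℕ) ≤ (p:ℕ) := by
      intro p q p' q' hp hq hp' hq' hm hm' hqq
      by_contra hc
      push_neg at hc
      have hcr : Cross s(p,q) s(p',q') := by
        rw [cross_norm (by rw [Fin.lt_def]; omega) (by rw [Fin.lt_def]; omega)]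
        left
        exact ⟨by rw [Fin.lt_def]; omega, by rw [Fin.lt_def]; omega, by rw [Fin.lt_def]; omega⟩
      exact hTnc _ hm _ hm' hcr
    -- C nonempty
    have hCne : ∃ v : Fin n, i ≤ (v:ℕ) ∧ s(A v, v) ∉ T := by
      by_contra hc
      push_neg at hc
      apply hne
      have hsub : T₂ ⊆ T := by
        intro e he
        obtain ⟨x, y, hxy, rfl⟩ := edge_repr_lt e (hT₂nd e he)
        rcases hleft x y he with hx | hy
        · by_cases hy2 : (y:ℕ) < i
          · exact (hagree x y hx hy2).mpr he
          · have hy3 : i ≤ (y:ℕ) := by omega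
            have := hAuniq y x hy3 hx he
            rw [this]
            exact hc y hy3
        · have hx : (x:ℕ) < i := by
            rw [Fin.lt_def] at hxy; omega
          exact (hagree x y hx hy).mpr he
      exact (Finset.eq_of_subset_of_card_le hsub (by omega)).symm
    -- main case split
    have hviv : i < n := hin
    set vi : Fin n := ⟨i, hin⟩ with hvidef
    have hvi : i ≤ (vi:ℕ) := le_refl i
    by_cases hfi : s(A vi, vi) ∈ T
    · -- MERGE case: recurse with i+1
      have hagree' : ∀ x y : Fin n, (x:ℕ) < i+1 → (y:ℕ) < i+1 →
          (s(x,y) ∈ T ↔ s(x,y) ∈ T₂) := by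
        have key : ∀ x : Fin n, (x:ℕ) < i → (s(x,vi) ∈ T ↔ s(x,vi) ∈ T₂) := by
          intro x hx
          constructor
          · intro hm
            have hxa : x = A vi := by
              by_contra hxa
              have hxvi : x ≠ vi := by
                intro h; rw [h] at hx; simp [hvidef] at hx
              have hbr := tree_bridge hTconn hTcard hTnd hxvi hm
              apply hbr
              have h1 : Conn (T.erase s(x,vi)) x (A vi) :=
                hblobT s(x,vi) ⟨vi, Sym2.mem_mk_right _ _, hvi⟩ _ _ hx (hAlt vi hvi)
              have h2 : s(A vi, vi) ∈ T.erase s(x,vi) := by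
                refine Finset.mem_erase.mpr ⟨?_, hfi⟩
                intro h
                rcases Sym2.eq_iff.mp h with ⟨h1', _⟩ | ⟨h1', h2'⟩
                · exact hxa h1'.symm
                · have := hAlt vi hvi; rw [h1'] at this; simp [hvidef] at this
              have havi : (A vi) ≠ vi := by
                intro h; have := hAlt vi hvi; rw [h] at this; simp [hvidef] at this
              exact h1.trans (conn_step havi h2)
            rw [hxa]; exact hAmem vi hvi
          · intro hm
            rw [hAuniq vi x hvi hx hm]; exact hfi
        intro x y hx hy
        rcases Nat.lt_or_ge (x:ℕ) i with hx' | hx' <;>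
          rcases Nat.lt_or_ge (y:ℕ) i with hy' | hy'
        · exact hagree x y hx' hy'
        · have : y = vi := Fin.ext (by simp [hvidef]; omega)
          rw [this]; exact key x hx'
        · have : x = vi := Fin.ext (by simp [hvidef]; omega)
          rw [this, Sym2.eq_swap]; exact key y hy'
        · have hxvi : x = vi := Fin.ext (by simp [hvidef]; omega)
          have hyvi : y = vi := Fin.ext (by simp [hvidef]; omega)
          rw [hxvi, hyvi]
          constructor
          · intro hm; exact absurd (hTnd _ hm) (by simp)
          · intro hm; exact absurd (hT₂nd _ hm) (by simp)
      by_cases hi1n : i + 1 = n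
      · -- everything agrees: contradiction
        exfalso
        apply hne
        have hsub : T ⊆ T₂ := by
          intro e he
          obtain ⟨x, y, _, rfl⟩ := edge_repr_lt e (hTnd e he)
          exact (hagree' x y (by omega) (by omega)).mp he
        exact Finset.eq_of_subset_of_card_le hsub (by omega)
      · have hblob' : ∀ x y : Fin n, (x:ℕ) < i+1 → (y:ℕ) < i+1 →
            Conn (T.filter (fun e => ∀ z ∈ e, (z:ℕ) < i+1)) x y := by
          have hmono : ∀ x y : Fin n, (x:ℕ) < i → (y:ℕ) < i →
              Conn (T.filter (fun e => ∀ z ∈ e, (z:ℕ) < i+1)) x y := by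
            intro x y hx hy
            refine conn_mono ?_ (hblob x y hx hy)
            intro e he
            have he' := Finset.mem_filter.mp he
            exact Finset.mem_filter.mpr ⟨he'.1, fun z hz => by have := he'.2 z hz; omega⟩
          have hstep : Conn (T.filter (fun e => ∀ z ∈ e, (z:ℕ) < i+1)) (A vi) vi := by
            refine conn_step ?_ ?_
            · intro h; have := hAlt vi hvi; rw [h] at this; simp [hvidef] at this
            · refine Finset.mem_filter.mpr ⟨hfi, ?_⟩
              intro z hz
              rcases Sym2.mem_iff.mp hz with rfl | rfl
              · have := hAlt vi hvi; omega
              · simp [hvidef]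
          intro x y hx hy
          rcases Nat.lt_or_ge (x:ℕ) i with hx' | hx' <;>
            rcases Nat.lt_or_ge (y:ℕ) i with hy' | hy'
          · exact hmono x y hx' hy'
          · have : y = vi := Fin.ext (by simp [hvidef]; omega)
            rw [this]
            exact (hmono x (A vi) hx' (hAlt vi hvi)).trans hstep
          · have : x = vi := Fin.ext (by simp [hvidef]; omega)
            rw [this]
            exact (conn_symm hstep).trans (hmono (A vi) y (hAlt vi hvi) hy')
          · have hxvi : x = vi := Fin.ext (by simp [hvidef]; omega)
            have hyvi : y = vi := Fin.ext (by simp [hvidef]; omega)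
            rw [hxvi, hyvi]
            exact Conn.rfl
        have hleft' : ∀ x y : Fin n, s(x,y) ∈ T₂ → (x:ℕ) < i+1 ∨ (y:ℕ) < i+1 := by
          intro x y h
          rcases hleft x y h with h | h
          · left; omega
          · right; omega
        obtain ⟨a, v, ha, hv, h3, h4, h5⟩ :=
          ih (i+1) (by omega) (by omega) (by omega) T T₂ hTconn hT₂conn hTcard hT₂card
            hTnd hT₂nd hTnc hT₂nc hagree' hblob' hleft' hne
        refine ⟨a, v, ?_, by omega, h3, h4, h5⟩
        rcases hleft a v h3 with h | h
        · exact h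
        · omega
    · -- MAIN case
      have interiorC : ∀ u w v : Fin n, i ≤ (u:ℕ) → (u:ℕ) < (v:ℕ) → (v:ℕ) < (w:ℕ) →
          s(u,w) ∈ T → s(A v, v) ∉ T := by
        intro u w v hu huv hvw hm hmem
        have hv : i ≤ (v:ℕ) := by omega
        have hcr : Cross s(A v, v) s(u,w) := by
          rw [cross_norm (by rw [Fin.lt_def]; have := hAlt v hv; omega)
            (by rw [Fin.lt_def]; omega)]
          left
          exact ⟨by rw [Fin.lt_def]; have := hAlt v hv; omega,
            by rw [Fin.lt_def]; omega, by rw [Fin.lt_def]; omega⟩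
        exact hTnc _ hmem _ hm hcr
      have ascend : ∀ m : ℕ, ∀ v : Fin n, n - (v:ℕ) ≤ m → i ≤ (v:ℕ) → s(A v, v) ∉ T →
          ∃ ℓ : Fin n, (v:ℕ) ≤ (ℓ:ℕ) ∧ i ≤ (ℓ:ℕ) ∧ s(A ℓ, ℓ) ∉ T ∧
            (∀ p q : Fin n, (p:ℕ) < i → i ≤ (q:ℕ) → s(p,q) ∈ T → (ℓ:ℕ) < (q:ℕ) →
              (p:ℕ) ≤ ((A ℓ):ℕ)) := by
        intro m
        induction m with
        | zero => intro v hb _ _; have := v.isLt; omega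
        | succ m ihm =>
          intro v hb hvi hfv
          by_cases hs : ∀ p q : Fin n, (p:ℕ) < i → i ≤ (q:ℕ) → s(p,q) ∈ T →
              (v:ℕ) < (q:ℕ) → (p:ℕ) ≤ ((A v):ℕ)
          · exact ⟨v, le_rfl, hvi, hfv, hs⟩
          · push_neg at hs
            obtain ⟨p, q, hp, hq, hm, hvq, hpa⟩ := hs
            have hfq : s(A q, q) ∉ T := by
              intro hfq
              have := hGapUniq p q (A q) hp (hAlt q hq) hq hm hfq
              have := hAmono v q hvi hq (by omega)
              omega
            obtain ⟨ℓ, h1, h2⟩ := ihm q (by have := v.isLt; omega) hq hfq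
            exact ⟨ℓ, by omega, h2⟩
      have hSU : ∃ v : Fin n, (i ≤ (v:ℕ) ∧ s(A v, v) ∉ T ∧
          (∀ p q : Fin n, (p:ℕ) < i → i ≤ (q:ℕ) → s(p,q) ∈ T → (v:ℕ) < (q:ℕ) →
            (p:ℕ) ≤ ((A v):ℕ))) ∧
          ¬ (∃ u w : Fin n, i ≤ (u:ℕ) ∧ (u:ℕ) < (v:ℕ) ∧ (v:ℕ) < (w:ℕ) ∧ s(u,w) ∈ T) := by
        have hSfilt : (univ.filter (fun v : Fin n => i ≤ (v:ℕ) ∧ s(A v, v) ∉ T ∧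
            (∀ p q : Fin n, (p:ℕ) < i → i ≤ (q:ℕ) → s(p,q) ∈ T → (v:ℕ) < (q:ℕ) →
              (p:ℕ) ≤ ((A v):ℕ)))).Nonempty := by
          obtain ⟨v0, h1, h2⟩ := hCne
          obtain ⟨ℓ, _, h3, h4, h5⟩ := ascend n v0 (by omega) h1 h2
          exact ⟨ℓ, Finset.mem_filter.mpr ⟨Finset.mem_univ _, h3, h4, h5⟩⟩
        obtain ⟨L, hLmem, hLmax'⟩ := Finset.exists_max_image _ (fun v : Fin n => (v:ℕ)) hSfilt
        obtain ⟨hLi, hLf, hLpout⟩ := (Finset.mem_filter.mp hLmem).2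
        have hLmax : ∀ ℓ : Fin n, i ≤ (ℓ:ℕ) → s(A ℓ, ℓ) ∉ T →
            (∀ p q : Fin n, (p:ℕ) < i → i ≤ (q:ℕ) → s(p,q) ∈ T → (ℓ:ℕ) < (q:ℕ) →
              (p:ℕ) ≤ ((A ℓ):ℕ)) → (ℓ:ℕ) ≤ (L:ℕ) :=
          fun ℓ h1 h2 h3 =>
            hLmax' ℓ (Finset.mem_filter.mpr ⟨Finset.mem_univ _, h1, h2, h3⟩)
        by_cases hcov : ∃ u w : Fin n, i ≤ (u:ℕ) ∧ (u:ℕ) < (L:ℕ) ∧ (L:ℕ) < (w:ℕ) ∧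
            s(u,w) ∈ T
        · obtain ⟨u₀, w₀, hu₀, hu₀L, hLw₀, hw₀mem⟩ := hcov
          have allW : ∀ u w : Fin n, i ≤ (u:ℕ) → (u:ℕ) < (L:ℕ) → (L:ℕ) < (w:ℕ) →
              s(u,w) ∈ T → (w:ℕ) = (L:ℕ) + 1 := by
            intro u w hu huL hLw hm
            by_contra hc
            have hwgt : (L:ℕ) + 1 < (w:ℕ) := by omega
            have hrlt : (w:ℕ) - 1 < n := by have := w.isLt; omega
            have hCr := interiorC u w ⟨(w:ℕ)-1, hrlt⟩ hu
              (by show (u:ℕ) < (w:ℕ)-1; omega) (by show (w:ℕ)-1 < (w:ℕ); omega) hm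
            obtain ⟨ℓ', h1, h2, h3, h4⟩ :=
              ascend n ⟨(w:ℕ)-1, hrlt⟩ (by show n - ((w:ℕ)-1) ≤ n; omega)
                (by show i ≤ (w:ℕ)-1; omega) hCr
            have h5 := hLmax ℓ' h2 h3 h4
            have h1' : (w:ℕ)-1 ≤ (ℓ':ℕ) := h1
            omega
          have hWval : (w₀:ℕ) = (L:ℕ) + 1 := allW u₀ w₀ hu₀ hu₀L hLw₀ hw₀mem
          have hfW : s(A w₀, w₀) ∈ T := by
            by_contra hc
            obtain ⟨ℓ', h1, h2, h3, h4⟩ := ascend n w₀ (by omega) (by omega) hc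
            have := hLmax ℓ' h2 h3 h4
            omega
          have hCovne : (univ.filter (fun u : Fin n =>
              i ≤ (u:ℕ) ∧ (u:ℕ) < (L:ℕ) ∧ s(u,w₀) ∈ T)).Nonempty :=
            ⟨u₀, Finset.mem_filter.mpr ⟨Finset.mem_univ _, hu₀, hu₀L, hw₀mem⟩⟩
          obtain ⟨us, husmem, husmin'⟩ :=
            Finset.exists_min_image _ (fun v : Fin n => (v:ℕ)) hCovne
          obtain ⟨husi, husL, husT⟩ := (Finset.mem_filter.mp husmem).2
          have husmin : ∀ u : Fin n, i ≤ (u:ℕ) → (u:ℕ) < (L:ℕ) → s(u,w₀) ∈ T →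
              (us:ℕ) ≤ (u:ℕ) :=
            fun u h1 h2 h3 =>
              husmin' u (Finset.mem_filter.mpr ⟨Finset.mem_univ _, h1, h2, h3⟩)
          have hpout : ∀ p q : Fin n, (p:ℕ) < i → i ≤ (q:ℕ) → s(p,q) ∈ T →
              (us:ℕ) < (q:ℕ) → (p:ℕ) ≤ ((A us):ℕ) := by
            intro p q hp hq hm husq
            rcases Nat.lt_trichotomy (q:ℕ) (w₀:ℕ) with hlt | heq | hgt
            · exfalso
              have hcr : Cross s(p,q) s(us,w₀) := by
                rw [cross_norm (by rw [Fin.lt_def]; omega) (by rw [Fin.lt_def]; omega)]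
                left
                exact ⟨by rw [Fin.lt_def]; omega, by rw [Fin.lt_def]; omega,
                  by rw [Fin.lt_def]; omega⟩
              exact hTnc _ hm _ husT hcr
            · have hqw : q = w₀ := Fin.ext heq
              rw [hqw] at hm
              have := hGapUniq p w₀ (A w₀) hp (hAlt w₀ (by omega)) (by omega) hm hfW
              have := hAmono us w₀ (by omega) (by omega) (by omega)
              omega
            · have := hLpout p q hp hq hm (by omega)
              have := hAmono us L (by omega) (by omega) (by omega)
              omega
          have hfus : s(A us, us) ∉ T := by
            intro hfu
            have husw : us ≠ w₀ := by intro h; rw [h] at husL; omega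
            have hbr := tree_bridge hTconn hTcard hTnd husw husT
            apply hbr
            have h1 : Conn (T.erase s(us,w₀)) us (A us) := by
              refine conn_symm (conn_step ?_ ?_)
              · intro h
                have := hAlt us (by omega)
                rw [h] at this; omega
              · refine Finset.mem_erase.mpr ⟨?_, hfu⟩
                intro h
                rcases Sym2.eq_iff.mp h with ⟨h1', _⟩ | ⟨h1', _⟩
                · have := hAlt us (by omega); rw [h1'] at this; omega
                · have := hAlt us (by omega); rw [h1'] at this; omega
            have h2 : Conn (T.erase s(us,w₀)) (A us) (A w₀) :=
              hblobT s(us,w₀) ⟨us, Sym2.mem_mk_left _ _, by omega⟩ _ _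
                (hAlt us (by omega)) (hAlt w₀ (by omega))
            have h3 : Conn (T.erase s(us,w₀)) (A w₀) w₀ := by
              refine conn_step ?_ ?_
              · intro h
                have := hAlt w₀ (by omega)
                rw [h] at this; omega
              · refine Finset.mem_erase.mpr ⟨?_, hfW⟩
                intro h
                rcases Sym2.eq_iff.mp h with ⟨h1', _⟩ | ⟨_, h2'⟩
                · have := hAlt w₀ (by omega); rw [h1'] at this; omega
                · have := hAlt w₀ (by omega); rw [← h2'] at husi; omega
            exact (h1.trans h2).trans h3
          refine ⟨us, ⟨by omega, hfus, hpout⟩, ?_⟩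
          rintro ⟨u₂, w₂, h1, h2, h3, h4⟩
          rcases Nat.lt_trichotomy (w₂:ℕ) (w₀:ℕ) with hlt | heq | hgt
          · have hcr : Cross s(u₂,w₂) s(us,w₀) := by
              rw [cross_norm (by rw [Fin.lt_def]; omega) (by rw [Fin.lt_def]; omega)]
              left
              exact ⟨by rw [Fin.lt_def]; omega, by rw [Fin.lt_def]; omega,
                by rw [Fin.lt_def]; omega⟩
            exact hTnc _ h4 _ husT hcr
          · have hw : w₂ = w₀ := Fin.ext heq
            rw [hw] at h4
            have := husmin u₂ h1 (by omega) h4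
            omega
          · have := allW u₂ w₂ h1 (by omega) (by omega) h4
            omega
        · exact ⟨L, ⟨hLi, hLf, hLpout⟩, hcov⟩
      -- final candidate: minimal element of S ∩ U
      have hSUfilt : (univ.filter (fun v : Fin n => (i ≤ (v:ℕ) ∧ s(A v, v) ∉ T ∧
          (∀ p q : Fin n, (p:ℕ) < i → i ≤ (q:ℕ) → s(p,q) ∈ T → (v:ℕ) < (q:ℕ) →
            (p:ℕ) ≤ ((A v):ℕ))) ∧
          ¬ (∃ u w : Fin n, i ≤ (u:ℕ) ∧ (u:ℕ) < (v:ℕ) ∧ (v:ℕ) < (w:ℕ) ∧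
            s(u,w) ∈ T))).Nonempty := by
        obtain ⟨v, h⟩ := hSU
        exact ⟨v, Finset.mem_filter.mpr ⟨Finset.mem_univ _, h⟩⟩
      obtain ⟨V, hVmem, hVmin'⟩ :=
        Finset.exists_min_image _ (fun v : Fin n => (v:ℕ)) hSUfilt
      obtain ⟨⟨hVi, hVf, hVpout⟩, hVU⟩ := (Finset.mem_filter.mp hVmem).2
      have hVmin : ∀ v : Fin n, (i ≤ (v:ℕ) ∧ s(A v, v) ∉ T ∧
          (∀ p q : Fin n, (p:ℕ) < i → i ≤ (q:ℕ) → s(p,q) ∈ T → (v:ℕ) < (q:ℕ) →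
            (p:ℕ) ≤ ((A v):ℕ))) →
          ¬ (∃ u w : Fin n, i ≤ (u:ℕ) ∧ (u:ℕ) < (v:ℕ) ∧ (v:ℕ) < (w:ℕ) ∧ s(u,w) ∈ T) →
          (V:ℕ) ≤ (v:ℕ) :=
        fun v h1 h2 => hVmin' v (Finset.mem_filter.mpr ⟨Finset.mem_univ _, h1, h2⟩)
      have haV : ((A V):ℕ) < i := hAlt V hVi
      refine ⟨A V, V, haV, hVi, hAmem V hVi, hVf, ?_⟩
      intro g hg
      obtain ⟨x, y, hxy, rfl⟩ := edge_repr_lt g (hTnd g hg)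
      by_cases hgT₂ : s(x,y) ∈ T₂
      · exact ⟨hT₂nc _ (hAmem V hVi) _ hgT₂, hT₂nc _ hgT₂ _ (hAmem V hVi)⟩
      · have hxy' : (x:ℕ) < (y:ℕ) := by rw [Fin.lt_def] at hxy; exact hxy
        have hnotboth : ¬ ((x:ℕ) < i ∧ (y:ℕ) < i) := by
          rintro ⟨h1, h2⟩
          exact hgT₂ ((hagree x y h1 h2).mp hg)
        have hAVV : A V < V := by rw [Fin.lt_def]; omega
        have hpat : ¬ (((A V):ℕ) < (x:ℕ) ∧ (x:ℕ) < (V:ℕ) ∧ (V:ℕ) < (y:ℕ)) ∧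
            ¬ ((x:ℕ) < ((A V):ℕ) ∧ ((A V):ℕ) < (y:ℕ) ∧ (y:ℕ) < (V:ℕ)) := by
          rcases Nat.lt_or_ge (x:ℕ) i with hxi | hxi
          · -- x left; y must be right
            have hyi : i ≤ (y:ℕ) := by omega
            rcases Nat.lt_trichotomy (y:ℕ) (V:ℕ) with hlt | heq | hgt
            · constructor
              · rintro ⟨_, _, h3⟩; omega
              · rintro ⟨h1, _, _⟩
                have hyuncov : ¬ (∃ u w : Fin n, i ≤ (u:ℕ) ∧ (u:ℕ) < (y:ℕ) ∧
                    (y:ℕ) < (w:ℕ) ∧ s(u,w) ∈ T) := by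
                  rintro ⟨u, w, hc1, hc2, hc3, hc4⟩
                  have hcr : Cross s(x,y) s(u,w) := by
                    rw [cross_norm (by rw [Fin.lt_def]; omega) (by rw [Fin.lt_def]; omega)]
                    left
                    exact ⟨by rw [Fin.lt_def]; omega, by rw [Fin.lt_def]; omega,
                      by rw [Fin.lt_def]; omega⟩
                  exact hTnc _ hg _ hc4 hcr
                by_cases hfy : s(A y, y) ∈ T
                · have := hGapUniq x y (A y) hxi (hAlt y hyi) hyi hg hfy
                  have := hAmono y V hyi hVi (by omega)
                  omega
                · have hynotpout : ¬ (∀ p q : Fin n, (p:ℕ) < i → i ≤ (q:ℕ) →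
                      s(p,q) ∈ T → (y:ℕ) < (q:ℕ) → (p:ℕ) ≤ ((A y):ℕ)) := by
                    intro hyp
                    have := hVmin y ⟨hyi, hfy, hyp⟩ hyuncov
                    omega
                  push_neg at hynotpout
                  obtain ⟨p', q', hp', hq', hm', hyq', hay'⟩ := hynotpout
                  have := hGapNest x y p' q' hxi hyi hp' hq' hg hm' hyq'
                  have := hAmono y V hyi hVi (by omega)
                  omega
            · constructor
              · rintro ⟨_, _, h3⟩; omega
              · rintro ⟨_, _, h3⟩; omega
            · have := hVpout x y hxi hyi hg (by omega)
              constructor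
              · rintro ⟨h1, _, _⟩; omega
              · rintro ⟨_, _, h3⟩; omega
          · -- right edge
            constructor
            · rintro ⟨_, h2, h3⟩
              exact hVU ⟨x, y, hxi, h2, h3, hg⟩
            · rintro ⟨h1, _, _⟩; omega
        constructor
        · intro hcr
          rw [cross_norm hAVV hxy] at hcr
          rcases hcr with ⟨h1, h2, h3⟩ | ⟨h1, h2, h3⟩
          · exact hpat.1 ⟨by rw [Fin.lt_def] at h1; exact h1, by rw [Fin.lt_def] at h2; exact h2,
              by rw [Fin.lt_def] at h3; exact h3⟩
          · exact hpat.2 ⟨by rw [Fin.lt_def] at h1; exact h1, by rw [Fin.lt_def] at h2; exact h2,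
              by rw [Fin.lt_def] at h3; exact h3⟩
        · intro hcr
          rw [cross_norm hxy hAVV] at hcr
          rcases hcr with ⟨h1, h2, h3⟩ | ⟨h1, h2, h3⟩
          · exact hpat.2 ⟨by rw [Fin.lt_def] at h1; exact h1, by rw [Fin.lt_def] at h2; exact h2,
              by rw [Fin.lt_def] at h3; exact h3⟩
          · exact hpat.1 ⟨by rw [Fin.lt_def] at h1; exact h1, by rw [Fin.lt_def] at h2; exact h2,
              by rw [Fin.lt_def] at h3; exact h3⟩

end NCSTProof5


namespace NCSTProof6
open NCSTProof NCSTProof2 NCSTProof3 NCSTProof4 NCSTProof5 Finset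
open scoped Classical
variable {n : ℕ}

/-- chain of consecutive border edges connects an interval -/
lemma border_chain (E : Finset (Edge n)) : ∀ (m a b : ℕ) (ha : a < n) (hb : b < n),
    a ≤ b → b = a + m →
    (∀ c : ℕ, a ≤ c → c < b → ∀ (h1 : c < n) (h2 : c+1 < n), s(⟨c,h1⟩,⟨c+1,h2⟩) ∈ E) →
    Conn E ⟨a,ha⟩ ⟨b,hb⟩ := by
  intro m
  induction m with
  | zero => intro a b ha hb _ hm _; subst hm; exact Conn.rfl
  | succ m ihm =>
    intro a b ha hb hab hm hborders
    have hb1 : b - 1 < n := by omega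
    have hstep : Conn E ⟨b-1, hb1⟩ ⟨b, hb⟩ := by
      have := hborders (b-1) (by omega) (by omega) hb1 (by omega)
      have hne : (⟨b-1, hb1⟩ : Fin n) ≠ ⟨b, hb⟩ := by
        intro h
        have := congrArg Fin.val h
        simp at this
        omega
      have heq : (⟨b-1+1, by omega⟩ : Fin n) = ⟨b, hb⟩ := Fin.ext (by simp; omega)
      exact conn_step hne (by rw [← heq]; exact this)
    refine Conn.trans ?_ hstep
    exact ihm a (b-1) ha hb1 (by omega) (by omega)
      (fun c h1 h2 h3 h4 => hborders c h1 (by omega) h3 h4)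

lemma flipseq_cons {T T' T₂ : Finset (Edge n)} {d : ℕ}
    (h1 : Flip T T') (h2 : FlipSeq T' T₂ d) : FlipSeq T T₂ (d+1) := by
  obtain ⟨f, hf0, hfd, hflip⟩ := h2
  refine ⟨fun k => if k = 0 then T else f (k-1), by simp, by simp [hfd], ?_⟩
  intro j hj
  rcases Nat.eq_zero_or_pos j with rfl | hj0
  · simpa [hf0] using h1
  · have hj1 : j - 1 < d := by omega
    have := hflip (j-1) hj1
    simp only [if_neg (by omega : ¬ j = 0), if_neg (by omega : ¬ j + 1 = 0)]
    have heq : j + 1 - 1 = (j-1) + 1 := by omega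
    rw [heq]
    have heq2 : j - 1 + 1 - 1 = j - 1 := by omega
    simpa [heq2] using this

lemma flipseq_snoc {T T₂' T₂ : Finset (Edge n)} {d : ℕ}
    (h2 : FlipSeq T T₂' d) (h1 : Flip T₂' T₂) : FlipSeq T T₂ (d+1) := by
  obtain ⟨f, hf0, hfd, hflip⟩ := h2
  refine ⟨fun k => if k ≤ d then f k else T₂, by simp [hf0], by simp, ?_⟩
  intro j hj
  rcases Nat.lt_or_ge j d with hjd | hjd
  · simp only [if_pos (by omega : j ≤ d), if_pos (by omega : j + 1 ≤ d)]
    exact hflip j hjd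
  · have hjd' : j = d := by omega
    subst hjd'
    simp only [if_pos (le_refl j), if_neg (by omega : ¬ j + 1 ≤ j)]
    rwa [hfd]

lemma card_moveB {T T₂ : Finset (Edge n)} {e f : Edge n}
    (hf2 : f ∈ T₂) (he : e ∈ T) (he2 : e ∉ T₂) :
    ((insert f (T.erase e)) \ T₂) = (T \ T₂).erase e := by
  ext g
  simp only [Finset.mem_sdiff, Finset.mem_insert, Finset.mem_erase]
  constructor
  · rintro ⟨rfl | ⟨hg1, hg2⟩, hg3⟩
    · exact absurd hf2 hg3
    · exact ⟨hg1, hg2, hg3⟩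
  · rintro ⟨hg1, hg2, hg3⟩
    exact ⟨Or.inr ⟨hg1, hg2⟩, hg3⟩

lemma card_moveA {T T₂ : Finset (Edge n)} {e f : Edge n}
    (hf : f ∈ T) (he : e ∈ T₂) (heT : e ∉ T) :
    (T \ (insert f (T₂.erase e))) = (T \ T₂).erase f := by
  ext g
  simp only [Finset.mem_sdiff, Finset.mem_insert, Finset.mem_erase, not_or]
  constructor
  · rintro ⟨hg1, hg2, hg3⟩
    refine ⟨hg2, hg1, ?_⟩
    intro hgT₂
    by_cases hge : g = e
    · rw [hge] at hg1; exact heT hg1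
    · exact hg3 ⟨hge, hgT₂⟩
  · rintro ⟨hg1, hg2, hg3⟩
    refine ⟨hg2, hg1, ?_⟩
    rintro ⟨_, hg5⟩
    exact hg3 hg5

/-- packaging an NCST -/
lemma mkNCST {T' : Finset (Edge n)} (hn : 0 < n)
    (hconn : ∀ x y, Conn T' x y) (hcard : T'.card = n - 1)
    (hnd : ∀ e ∈ T', ¬ e.IsDiag) (hnc : ∀ e ∈ T', ∀ f ∈ T', ¬ Cross e f) : NCST T' :=
  ⟨⟨connected_of_conn hn hconn, hcard, hnd⟩, hnc⟩

/-- unpack an NCST -/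
lemma NCST.unpack {T : Finset (Edge n)} (h : NCST T) :
    (∀ x y, Conn T x y) ∧ T.card + 1 = n ∧ (∀ e ∈ T, ¬ e.IsDiag) ∧
      (∀ e ∈ T, ∀ f ∈ T, ¬ Cross e f) ∧ 0 < n := by
  obtain ⟨⟨hc, hcard, hnd⟩, hnc⟩ := h
  have hn : 0 < n := by
    obtain ⟨v⟩ := hc.nonempty
    exact v.pos
  exact ⟨fun x y => conn_of_connected hc x y, by omega, hnd, hnc, hn⟩

end NCSTProof6


namespace NCSTProof7
open NCSTProof NCSTProof2 NCSTProof3 NCSTProof4 NCSTProof5 NCSTProof6 Finset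
open scoped Classical
variable {n : ℕ}

lemma next_eq (j : Fin n) (h : (j:ℕ)+1 < n) : next j = ⟨(j:ℕ)+1, h⟩ := by
  apply Fin.ext
  show ((j:ℕ)+1) % n = (j:ℕ)+1
  exact Nat.mod_eq_of_lt h

/-- internal edges of a tree containing the border path are borders -/
lemma border_only {S : Finset (Edge n)} (B : ℕ)
    (hconn : ∀ x y, Conn S x y) (hcard : S.card + 1 = n) (hnd : ∀ e ∈ S, ¬ e.IsDiag)
    (hborders : ∀ (c : ℕ) (h1 : c < n) (h2 : c+1 < n), c+1 < B → s(⟨c,h1⟩,⟨c+1,h2⟩) ∈ S)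
    (x y : Fin n) (hmem : s(x,y) ∈ S) (hxy : (x:ℕ) < (y:ℕ)) (hyB : (y:ℕ) < B) :
    (y:ℕ) = (x:ℕ) + 1 := by
  by_contra hc
  have hxy' : x ≠ y := by intro h; rw [h] at hxy; omega
  have hbr := tree_bridge hconn hcard hnd hxy' hmem
  apply hbr
  have hchain : Conn (S.erase s(x,y)) ⟨(x:ℕ), x.isLt⟩ ⟨(y:ℕ), y.isLt⟩ := by
    refine border_chain _ ((y:ℕ) - (x:ℕ)) (x:ℕ) (y:ℕ) x.isLt y.isLt (by omega) (by omega) ?_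
    intro c hc1 hc2 h1 h2
    refine Finset.mem_erase.mpr ⟨?_, hborders c h1 h2 (by omega)⟩
    intro h
    rcases Sym2.eq_iff.mp h with ⟨h1', h2'⟩ | ⟨h1', h2'⟩
    · have e1 := congrArg Fin.val h1'
      have e2 := congrArg Fin.val h2'
      simp at e1 e2
      omega
    · have e1 := congrArg Fin.val h1'
      have e2 := congrArg Fin.val h2'
      simp at e1 e2
      omega
  have hx : (⟨(x:ℕ), x.isLt⟩ : Fin n) = x := Fin.ext rfl
  have hy : (⟨(y:ℕ), y.isLt⟩ : Fin n) = y := Fin.ext rfl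
  rwa [hx, hy] at hchain

theorem core : ∀ d : ℕ, ∀ (i : ℕ) (T T₂ : Finset (Edge n)), i ≤ n → NCST T → NCST T₂ →
    (∀ j : Fin n, (j:ℕ)+1 < i → s(j, next j) ∈ T) →
    (∀ a b : Fin n, s(a,b) ∈ T₂ → (a:ℕ) < i ∨ (b:ℕ) < i) →
    (T \ T₂).card = d → FlipSeq T T₂ d := by
  intro d
  induction d with
  | zero =>
    intro i T T₂ hi h₁ h₂ hT₁ hT₂ hcard
    obtain ⟨_, hc1, _, _, _⟩ := NCST.unpack h₁
    obtain ⟨_, hc2, _, _, _⟩ := NCST.unpack h₂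
    have hsub : T ⊆ T₂ := by
      rw [← Finset.sdiff_eq_empty_iff_subset]
      exact Finset.card_eq_zero.mp hcard
    have heq : T = T₂ := Finset.eq_of_subset_of_card_le hsub (by omega)
    exact ⟨fun _ => T, rfl, heq, fun j hj => absurd hj (by omega)⟩
  | succ d ihd =>
    intro i T T₂ hi h₁ h₂ hT₁ hT₂ hdcard
    obtain ⟨hTconn, hTcard, hTnd, hTnc, hn⟩ := NCST.unpack h₁
    obtain ⟨hT₂conn, hT₂card, hT₂nd, hT₂nc, _⟩ := NCST.unpack h₂
    have hne : T ≠ T₂ := by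
      intro h
      rw [h] at hdcard
      simp at hdcard
    set Pred : ℕ → Prop :=
      fun ℓ => ∀ (j : Fin n) (h : (j:ℕ)+1 < n), (j:ℕ)+1 < ℓ → s(j, ⟨(j:ℕ)+1, h⟩) ∈ T
      with hPred
    have hPi : Pred i := by
      intro j h hj
      have := hT₁ j hj
      rwa [next_eq j h] at this
    set mp : ℕ := Nat.findGreatest Pred n with hmp
    have hmp_spec : Pred mp := Nat.findGreatest_spec hi hPi
    have hi_mp : i ≤ mp := Nat.le_findGreatest hi hPi
    have hmp1 : 1 ≤ mp := Nat.le_findGreatest (by omega)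
      (fun j h hj => absurd hj (by omega))
    have hmp_le : mp ≤ n := Nat.findGreatest_le n
    by_cases hA : ∃ (j : Fin n) (h : (j:ℕ)+1 < n), (j:ℕ)+1 < mp ∧ s(j, ⟨(j:ℕ)+1, h⟩) ∉ T₂
    · -- MOVE A : flip on the T₂ side with a border edge of T
      obtain ⟨j, hjn, hjmp, hfT₂⟩ := hA
      set j1 : Fin n := ⟨(j:ℕ)+1, hjn⟩ with hj1
      have hjj1 : j ≠ j1 := by
        intro h
        have := congrArg Fin.val h
        simp [hj1] at this
      have hfT : s(j, j1) ∈ T := hmp_spec j hjn hjmp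
      have hsep : ¬ Conn (T₂ ∩ T) j j1 := by
        intro h
        have hbr := tree_bridge hTconn hTcard hTnd hjj1 hfT
        apply hbr
        refine conn_mono ?_ h
        intro g hg
        have hg' := Finset.mem_inter.mp hg
        refine Finset.mem_erase.mpr ⟨?_, hg'.2⟩
        rintro rfl
        exact hfT₂ hg'.1
      obtain ⟨e, heT₂, heT, hconn'⟩ := swap_lemma hT₂conn hT₂card hT₂nd hjj1 hsep
      set T₂' := insert s(j, j1) (T₂.erase e) with hT₂'
      have hfnotin : s(j,j1) ∉ T₂.erase e := fun h => hfT₂ (Finset.mem_of_mem_erase h)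
      have hcard' : T₂'.card + 1 = n := by
        rw [hT₂', Finset.card_insert_of_notMem hfnotin, Finset.card_erase_of_mem heT₂]
        have : 0 < T₂.card := Finset.card_pos.mpr ⟨_, heT₂⟩
        omega
      have hj1val : (j1:ℕ) = (j:ℕ)+1 := rfl
      have hNCST' : NCST T₂' := by
        refine mkNCST hn hconn' (by omega) ?_ ?_
        · intro g hg
          rcases Finset.mem_insert.mp hg with rfl | hg
          · simp [Sym2.isDiag_iff_proj_eq]
            exact hjj1
          · exact hT₂nd g (Finset.mem_of_mem_erase hg)
        · intro g hg g' hg'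
          rcases Finset.mem_insert.mp hg with rfl | hg <;>
            rcases Finset.mem_insert.mp hg' with rfl | hg'
          · exact (border_no_cross hj1val _).1
          · exact (border_no_cross hj1val _).1
          · exact (border_no_cross hj1val _).2
          · exact hT₂nc g (Finset.mem_of_mem_erase hg) g' (Finset.mem_of_mem_erase hg')
      have hflip : Flip T₂' T₂ := by
        refine ⟨hNCST', h₂, s(j,j1), Finset.mem_insert_self _ _, e, ?_, ?_⟩
        · intro h
          rcases Finset.mem_insert.mp h with h | h
          · rw [h] at heT₂; exact hfT₂ heT₂
          · exact (Finset.notMem_erase _ _) h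
        · rw [hT₂', Finset.erase_insert hfnotin, Finset.insert_erase heT₂]
      have hT₂'' : ∀ a b : Fin n, s(a,b) ∈ T₂' → (a:ℕ) < max i ((j:ℕ)+2) ∨
          (b:ℕ) < max i ((j:ℕ)+2) := by
        intro a b hab
        rcases Finset.mem_insert.mp hab with h | h
        · rcases Sym2.eq_iff.mp h with ⟨rfl, rfl⟩ | ⟨rfl, rfl⟩
          · left; omega
          · right; omega
        · rcases hT₂ a b (Finset.mem_of_mem_erase h) with h | h
          · left; omega
          · right; omega
      have hT₁'' : ∀ j₂ : Fin n, (j₂:ℕ)+1 < max i ((j:ℕ)+2) → s(j₂, next j₂) ∈ T := by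
        intro j₂ hj₂
        have hlt : (j₂:ℕ)+1 < mp := by omega
        have hltn : (j₂:ℕ)+1 < n := by omega
        rw [next_eq j₂ hltn]
        exact hmp_spec j₂ hltn hlt
      have hcard2 : (T \ T₂').card = d := by
        rw [hT₂', card_moveA hfT heT₂ heT]
        rw [Finset.card_erase_of_mem (Finset.mem_sdiff.mpr ⟨hfT, hfT₂⟩)]
        omega
      have hseq := ihd (max i ((j:ℕ)+2)) T T₂' (by omega) h₁ hNCST' hT₁'' hT₂'' hcard2
      exact flipseq_snoc hseq hflip
    · -- no missing border below mp in T₂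
      push_neg at hA
      by_cases hmpn : mp = n
      · exfalso
        apply hne
        have hsub : T ⊆ T₂ := by
          intro g hg
          obtain ⟨x, y, hxy, rfl⟩ := edge_repr_lt g (hTnd g hg)
          have hxy' : (x:ℕ) < (y:ℕ) := by rw [Fin.lt_def] at hxy; exact hxy
          have hyx := border_only n hTconn hTcard hTnd
            (fun c h1 h2 hc => hmp_spec ⟨c, h1⟩ h2 (by show c+1 < mp; omega))
            x y hg hxy' y.isLt
          have hyeq : y = ⟨(x:ℕ)+1, by omega⟩ := Fin.ext (by simp; omega)
          rw [hyeq]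
          exact hA x (by omega) (by omega)
        exact Finset.eq_of_subset_of_card_le hsub (by omega)
      · have hmpn' : mp < n := lt_of_le_of_ne hmp_le hmpn
        have hTborders : ∀ (c : ℕ) (h1 : c < n) (h2 : c+1 < n), c+1 < mp →
            s(⟨c,h1⟩,⟨c+1,h2⟩) ∈ T := fun c h1 h2 hc => hmp_spec ⟨c,h1⟩ h2 hc
        have hT₂borders : ∀ (c : ℕ) (h1 : c < n) (h2 : c+1 < n), c+1 < mp →
            s(⟨c,h1⟩,⟨c+1,h2⟩) ∈ T₂ := fun c h1 h2 hc => hA ⟨c,h1⟩ h2 hc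
        have hagree_mp : ∀ x y : Fin n, (x:ℕ) < mp → (y:ℕ) < mp →
            (s(x,y) ∈ T ↔ s(x,y) ∈ T₂) := by
          have main : ∀ x y : Fin n, (x:ℕ) < (y:ℕ) → (y:ℕ) < mp →
              (s(x,y) ∈ T ↔ s(x,y) ∈ T₂) := by
            intro x y hxy hy
            constructor
            · intro hmem
              have hyx := border_only mp hTconn hTcard hTnd hTborders x y hmem hxy hy
              have hyeq : y = ⟨(x:ℕ)+1, by omega⟩ := Fin.ext (by simp; omega)
              rw [hyeq]
              exact hA x (by omega) (by omega)
            · intro hmem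
              have hyx := border_only mp hT₂conn hT₂card hT₂nd hT₂borders x y hmem hxy hy
              have hyeq : y = ⟨(x:ℕ)+1, by omega⟩ := Fin.ext (by simp; omega)
              rw [hyeq]
              exact hmp_spec x (by omega) (by omega)
          intro x y hx hy
          rcases Nat.lt_trichotomy (x:ℕ) (y:ℕ) with h | h | h
          · exact main x y h hy
          · have : x = y := Fin.ext h
            subst this
            constructor
            · intro hmem; exact absurd (hTnd _ hmem) (by simp)
            · intro hmem; exact absurd (hT₂nd _ hmem) (by simp)
          · rw [Sym2.eq_swap]
            exact main y x h hx
        have hblob_mp : ∀ x y : Fin n, (x:ℕ) < mp → (y:ℕ) < mp →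
            Conn (T.filter (fun e => ∀ z ∈ e, (z:ℕ) < mp)) x y := by
          have main : ∀ x y : Fin n, (x:ℕ) ≤ (y:ℕ) → (y:ℕ) < mp →
              Conn (T.filter (fun e => ∀ z ∈ e, (z:ℕ) < mp)) x y := by
            intro x y hxy hy
            have hchain := border_chain (T.filter (fun e => ∀ z ∈ e, (z:ℕ) < mp))
              ((y:ℕ) - (x:ℕ)) (x:ℕ) (y:ℕ) x.isLt y.isLt hxy (by omega) ?_
            · have hx : (⟨(x:ℕ), x.isLt⟩ : Fin n) = x := Fin.ext rfl
              have hy' : (⟨(y:ℕ), y.isLt⟩ : Fin n) = y := Fin.ext rfl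
              rwa [hx, hy'] at hchain
            · intro c hc1 hc2 h1 h2
              refine Finset.mem_filter.mpr ⟨hTborders c h1 h2 (by omega), ?_⟩
              intro z hz
              rcases Sym2.mem_iff.mp hz with rfl | rfl <;> simp <;> omega
          intro x y hx hy
          rcases le_or_gt (x:ℕ) (y:ℕ) with h | h
          · exact main x y h hy
          · exact conn_symm (main y x (by omega) hx)
        have hleft_mp : ∀ x y : Fin n, s(x,y) ∈ T₂ → (x:ℕ) < mp ∨ (y:ℕ) < mp := by
          intro x y h
          rcases hT₂ x y h with h | h
          · left; omega
          · right; omega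
        obtain ⟨a, v, hav, hva, hmem2, hnotT, h5⟩ :=
          HC n mp (by omega) hmp1 hmpn' T T₂ hTconn hT₂conn hTcard hT₂card hTnd hT₂nd
            hTnc hT₂nc hagree_mp hblob_mp hleft_mp hne
        have havne : a ≠ v := by
          intro h
          rw [h] at hav
          omega
        have hsep : ¬ Conn (T ∩ T₂) a v := by
          intro h
          have hbr := tree_bridge hT₂conn hT₂card hT₂nd havne hmem2
          apply hbr
          refine conn_mono ?_ h
          intro g hg
          have hg' := Finset.mem_inter.mp hg
          refine Finset.mem_erase.mpr ⟨?_, hg'.2⟩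
          rintro rfl
          exact hnotT hg'.1
        obtain ⟨e, heT, heT₂, hconn'⟩ := swap_lemma hTconn hTcard hTnd havne hsep
        set T' := insert s(a, v) (T.erase e) with hT'
        have hfnotin : s(a,v) ∉ T.erase e := fun h => hnotT (Finset.mem_of_mem_erase h)
        have hcard' : T'.card + 1 = n := by
          rw [hT', Finset.card_insert_of_notMem hfnotin, Finset.card_erase_of_mem heT]
          have : 0 < T.card := Finset.card_pos.mpr ⟨_, heT⟩
          omega
        have hNCST' : NCST T' := by
          refine mkNCST hn hconn' (by omega) ?_ ?_
          · intro g hg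
            rcases Finset.mem_insert.mp hg with rfl | hg
            · simp [Sym2.isDiag_iff_proj_eq]
              exact havne
            · exact hTnd g (Finset.mem_of_mem_erase hg)
          · intro g hg g' hg'
            rcases Finset.mem_insert.mp hg with rfl | hg <;>
              rcases Finset.mem_insert.mp hg' with rfl | hg'
            · exact cross_self_false _
            · exact (h5 g' (Finset.mem_of_mem_erase hg')).1
            · exact (h5 g (Finset.mem_of_mem_erase hg)).2
            · exact hTnc g (Finset.mem_of_mem_erase hg) g' (Finset.mem_of_mem_erase hg')
        have hflip : Flip T T' := ⟨h₁, hNCST', e, heT, s(a,v), hnotT, hT'⟩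
        have hcard2 : (T' \ T₂).card = d := by
          rw [hT', card_moveB hmem2 heT heT₂]
          rw [Finset.card_erase_of_mem (Finset.mem_sdiff.mpr ⟨heT, heT₂⟩)]
          omega
        have hT₁' : ∀ j₂ : Fin n, (j₂:ℕ)+1 < mp → s(j₂, next j₂) ∈ T' := by
          intro j₂ hj₂
          have hltn : (j₂:ℕ)+1 < n := by omega
          rw [next_eq j₂ hltn]
          refine Finset.mem_insert_of_mem (Finset.mem_erase.mpr ⟨?_, hmp_spec j₂ hltn hj₂⟩)
          rintro rfl
          exact heT₂ (hA j₂ hltn hj₂)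
        have hseq := ihd mp T' T₂ (by omega) hNCST' h₂ hT₁' hleft_mp hcard2
        exact flipseq_cons hflip hseq

end NCSTProof7

open scoped Classical in
/-- Under the hypotheses of the main lemma, the flip sequence produced by good flips has
length exactly `|T₁ Δ T₂|/2`, which is at most `n - 1 - k` where `k` is the number of
common border edges. -/
theorem main_lemma_exact {n : ℕ} (i : ℕ) (hi : i ≤ n) (T₁ T₂ : Finset (Edge n))
    (h₁ : NCST T₁) (h₂ : NCST T₂)
    (hT₁ : ∀ j : Fin n, (j : ℕ) + 1 < i → s(j, next j) ∈ T₁)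
    (hT₂ : ∀ a b : Fin n, s(a, b) ∈ T₂ → (a : ℕ) < i ∨ (b : ℕ) < i)
    (k : ℕ) (hk : k = ((T₁ ∩ T₂).filter (fun e => IsBorder e)).card) :
    FlipSeq T₁ T₂ (((T₁ \ T₂) ∪ (T₂ \ T₁)).card / 2) ∧
      ((T₁ \ T₂) ∪ (T₂ \ T₁)).card / 2 ≤ n - 1 - k := by
  obtain ⟨_, hc1, _, _, hn⟩ := NCSTProof6.NCST.unpack h₁
  obtain ⟨_, hc2, _, _, _⟩ := NCSTProof6.NCST.unpack h₂
  have hd1 : (T₁ \ T₂).card + (T₁ ∩ T₂).card = T₁.card :=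
    Finset.card_sdiff_add_card_inter T₁ T₂
  have hd2 : (T₂ \ T₁).card + (T₂ ∩ T₁).card = T₂.card :=
    Finset.card_sdiff_add_card_inter T₂ T₁
  have hint : (T₂ ∩ T₁).card = (T₁ ∩ T₂).card := by rw [Finset.inter_comm]
  have hdd : (T₂ \ T₁).card = (T₁ \ T₂).card := by omega
  have hD : ((T₁ \ T₂) ∪ (T₂ \ T₁)).card = (T₁ \ T₂).card + (T₂ \ T₁).card :=
    Finset.card_union_of_disjoint disjoint_sdiff_sdiff
  have hD2 : ((T₁ \ T₂) ∪ (T₂ \ T₁)).card / 2 = (T₁ \ T₂).card := by omega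
  have hkc : k ≤ (T₁ ∩ T₂).card := by
    rw [hk]
    exact Finset.card_le_card (Finset.filter_subset _ _)
  constructor
  · rw [hD2]
    exact NCSTProof7.core (T₁ \ T₂).card i T₁ T₂ hi h₁ h₂ hT₁ hT₂ rfl
  · omega
end

section
/- Every non-crossing spanning tree T on n ≥ 2 points in convex position, partitioned into ⌈√n⌉ consecutive arcs ('sections') of size at most ⌈√n⌉, either has some section containing no edge of T with both endpoints in that section, or T contains at least ⌈√n⌉ border edges (at least one border edge per section). -/
open Finset

lemma exists_neighbor {n : ℕ} (hn : 2 ≤ n) (T : Finset (Edge n)) (hT : NCST T)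
    (m : Fin n) : ∃ z : Fin n, z ≠ m ∧ s(m, z) ∈ T := by
  have hconn := hT.1.1
  have : Nontrivial (Fin n) := Fin.nontrivial_iff_two_le.mpr hn
  obtain ⟨w, hw⟩ := exists_ne m
  obtain ⟨p⟩ := hconn m w
  have hnil : ¬ p.Nil := by
    intro h
    exact hw (h.eq.symm) |>.elim
  cases p with
  | nil => exact absurd rfl hw
  | cons hadj q =>
    rw [SimpleGraph.fromEdgeSet_adj] at hadj
    exact ⟨_, fun h => hadj.2 h.symm, hadj.1⟩

lemma key {n : ℕ} (hn : 2 ≤ n) (T : Finset (Edge n)) (hT : NCST T) :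
    ∀ d : ℕ, ∀ x y : Fin n, (y : ℕ) - x = d → x < y → s(x, y) ∈ T →
      ∃ j : Fin n, x ≤ j ∧ (j : ℕ) + 1 ≤ (y : ℕ) ∧ s(j, next j) ∈ T ∧
        ((next j : ℕ) = (j : ℕ) + 1) := by
  intro d
  induction d using Nat.strong_induction_on with
  | _ d IH =>
  intro x y hd hxy he
  have hxy' : (x : ℕ) < y := hxy
  have hx1n : (x : ℕ) + 1 < n := lt_of_le_of_lt hxy' y.isLt
  by_cases hy : (y : ℕ) = x + 1
  · -- border edge directly
    refine ⟨x, le_refl _, by omega, ?_, ?_⟩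
    · have : next x = y := by
        apply Fin.ext
        simp [next, Nat.mod_eq_of_lt hx1n, hy]
      rw [this]; exact he
    · simp [next, Nat.mod_eq_of_lt hx1n]
  · -- y > x+1; consider vertex m = x+1
    set m : Fin n := ⟨(x : ℕ) + 1, hx1n⟩ with hm
    have hmy : (m : ℕ) < y := by simp [hm]; omega
    have hxm : x < m := by simp [Fin.lt_def, hm]
    obtain ⟨z, hzm, hz⟩ := exists_neighbor hn T hT m
    have hm' : (m : ℕ) = (x : ℕ) + 1 := rfl
    have hNC := hT.2
    rcases lt_trichotomy (z : ℕ) (m : ℕ) with h1 | h1 | h1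
    · -- z ≤ x
      rcases lt_trichotomy (z : ℕ) (x : ℕ) with h2 | h2 | h2
      · -- crossing contradiction
        exfalso
        apply hNC _ he _ hz
        refine ⟨x, y, z, m, rfl, Sym2.eq_swap, hxy, ?_, Or.inr ⟨?_, hxm, hmy⟩⟩
        · exact h2.trans (by simpa [hm] using Nat.lt_succ_self (x:ℕ))
        · exact h2
      · -- z = x : border edge s(x, m)
        have hzx : z = x := Fin.ext h2
        refine ⟨x, le_refl _, by omega, ?_, ?_⟩
        · have : next x = m := Fin.ext (by simp [next, hm, Nat.mod_eq_of_lt hx1n])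
          rw [this, ← hzx, Sym2.eq_swap]; exact hz
        · simp [next, Nat.mod_eq_of_lt hx1n]
      · omega
    · exact absurd (Fin.ext h1) hzm
    · -- z > m
      rcases lt_or_ge (y : ℕ) (z : ℕ) with h2 | h2
      · exfalso
        apply hNC _ he _ hz
        exact ⟨x, y, m, z, rfl, rfl, hxy, h1, Or.inl ⟨hxm, hmy, h2⟩⟩
      · -- m < z ≤ y : recurse on edge s(m, z)
        have hmz : m < z := h1
        obtain ⟨j, hj1, hj2, hj3, hj4⟩ :=
          IH ((z : ℕ) - m) (by omega) m z rfl hmz hz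
        exact ⟨j, le_trans (le_of_lt hxm) hj1, by simp only [Fin.le_def, hm'] at hj1 ⊢; omega, hj3, hj4⟩

/-- Partition the points into `⌈√n⌉` consecutive sections of size at most `⌈√n⌉`
(given by cut points `c 0 = 0 ≤ c 1 ≤ … ≤ c K = n`). Then either some section contains
no edge of `T` internal to it, or every section contains a border edge of `T`
(hence `T` has at least `⌈√n⌉` border edges). -/
theorem sections_dichotomy {n : ℕ} (hn : 2 ≤ n) (T : Finset (Edge n)) (hT : NCST T)
    (K : ℕ) (hK : K = ⌈Real.sqrt n⌉₊)
    (c : ℕ → ℕ) (hmono : Monotone c) (hc0 : c 0 = 0) (hcK : c K = n)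
    (hsize : ∀ j < K, c (j + 1) - c j ≤ K) :
    (∃ j < K, ∀ a b : Fin n, s(a, b) ∈ T →
      ¬ (c j ≤ (a : ℕ) ∧ (a : ℕ) < c (j + 1) ∧ c j ≤ (b : ℕ) ∧ (b : ℕ) < c (j + 1))) ∨
    (∀ j < K, ∃ a b : Fin n, s(a, b) ∈ T ∧ IsBorder s(a, b) ∧
      c j ≤ (a : ℕ) ∧ (a : ℕ) < c (j + 1) ∧ c j ≤ (b : ℕ) ∧ (b : ℕ) < c (j + 1)) := by
  rcases em (∃ j < K, ∀ a b : Fin n, s(a, b) ∈ T →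
      ¬ (c j ≤ (a : ℕ) ∧ (a : ℕ) < c (j + 1) ∧ c j ≤ (b : ℕ) ∧ (b : ℕ) < c (j + 1)))
    with h | h
  · exact Or.inl h
  · right
    push_neg at h
    intro j hj
    obtain ⟨a, b, hab, ha1, ha2, hb1, hb2⟩ := h j hj
    -- WLOG a < b
    have hne : a ≠ b := by
      intro hEq
      exact hT.1.2.2 _ hab (by rw [hEq]; exact Sym2.mk_isDiag_iff.mpr rfl)
    have main : ∀ x y : Fin n, s(x, y) ∈ T → x < y →
        c j ≤ (x : ℕ) → (x : ℕ) < c (j + 1) → c j ≤ (y : ℕ) → (y : ℕ) < c (j + 1) →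
        ∃ a b : Fin n, s(a, b) ∈ T ∧ IsBorder s(a, b) ∧
          c j ≤ (a : ℕ) ∧ (a : ℕ) < c (j + 1) ∧ c j ≤ (b : ℕ) ∧ (b : ℕ) < c (j + 1) := by
      intro x y hxyT hxy hx1 hx2 hy1 hy2
      obtain ⟨i, hi1, hi2, hi3, hi4⟩ := key hn T hT ((y : ℕ) - x) x y rfl hxy hxyT
      have hxi : (x : ℕ) ≤ (i : ℕ) := hi1
      exact ⟨i, next i, hi3, ⟨i, rfl⟩, by omega, by omega, by omega, by omega⟩
    rcases lt_or_gt_of_ne hne with hlt | hgt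
    · exact main a b hab hlt ha1 ha2 hb1 hb2
    · exact main b a (by rwa [Sym2.eq_swap] at hab) hgt hb1 hb2 ha1 ha2
end
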